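/- arXiv:1908.01911 — 6 statements merged into one kernel-verified Lean document; each statement's English description precedes it below -/
import Mathlib

section
/- Let (X,d,μ) be a space of homogeneous type with μ(X) = ∞ in which balls have positive finite measure, p ∈ (0,1], q ∈ [1,∞], q > p, and let a be a local (p,q)-atom supported on a ball B = B(x₀,r₀) with r₀ ∈ (1,∞). Then for any x ∉ B(x₀, 2A₀r₀) and any test function φ with ‖φ‖_{G(x,r,β,γ)} ≤ 1 for some r ∈ (0,1], one has |∫_X a(y)φ(y)dμ(y)| ≤ C [r/d(x₀,x)]^γ μ(B)^{1-1/p} / V(x₀,x), with C independent of a, x, φ and r. -/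
open MeasureTheory ENNReal

/-! For `r₀ > 1` the atom has no vanishing moment, so only its size enters. On the
support of `a` the quasi-triangle inequality keeps `y` at distance at least `d(x₀,x)/(2A₀)`
from `x`, and the ball `B(x₀, d(x₀,x))` lies in the `2ⁿ`-dilate of `B(x, d(x₀,x)/(2A₀))` once
`4A₀² ≤ 2ⁿ`; so the size condition and doubling give `|φ| ≲ (r/d(x₀,x))^γ / V(x₀,x)` there.
Hölder's inequality on `B` gives `‖a‖₁ ≤ μ(B)^{1-1/p}`. -/

/-- The quasi-metric ball `B(x,r) := {y : d(x,y) < r}`. -/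
def qball {X : Type*} (d : X → X → ℝ) (x : X) (r : ℝ) : Set X := {y | d x y < r}

theorem eLpNorm_one_le_of_support_subset {α E : Type*} [MeasurableSpace α]
    [NormedAddCommGroup E] {μ : Measure α} {f : α → E} {q : ℝ≥0∞} {s : Set α} {e : ℝ}
    (hq : 1 ≤ q) (hf : AEStronglyMeasurable f μ) (hfs : Function.support f ⊆ s)
    (hs0 : μ s ≠ 0) (hs : μ s ≠ ⊤) (hfq : eLpNorm f q μ ≤ μ s ^ (1 / q.toReal - e)) :
    eLpNorm f 1 μ ≤ μ s ^ (1 - e) := by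
  rw [← eLpNorm_restrict_eq_of_support_subset hfs]
  calc eLpNorm f 1 (μ.restrict s)
      ≤ eLpNorm f q (μ.restrict s) *
          μ.restrict s Set.univ ^ (1 / (1 : ℝ≥0∞).toReal - 1 / q.toReal) :=
        eLpNorm_le_eLpNorm_mul_rpow_measure_univ hq hf.restrict
    _ ≤ μ s ^ (1 / q.toReal - e) * μ s ^ (1 - 1 / q.toReal) := by
        rw [eLpNorm_restrict_eq_of_support_subset hfs, Measure.restrict_apply_univ,
          ENNReal.toReal_one, one_div_one]
        gcongr
    _ = μ s ^ (1 - e) := by rw [← ENNReal.rpow_add _ _ hs0 hs]; ring_nf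

theorem abs_integral_mul_le_of_abs_le_on_support {α : Type*} [MeasurableSpace α]
    {μ : Measure α} {f g : α → ℝ} (hf : Integrable f μ) {M : ℝ}
    (hg : ∀ y, f y ≠ 0 → |g y| ≤ M) :
    |∫ y, f y * g y ∂μ| ≤ M * ∫ y, ‖f y‖ ∂μ := by
  have hpointwise : ∀ y, ‖f y * g y‖ ≤ M * ‖f y‖ := fun y => by
    by_cases hy : f y = 0
    · simp [hy]
    · rw [norm_mul, mul_comm, Real.norm_eq_abs (g y)]
      exact mul_le_mul_of_nonneg_right (hg y hy) (norm_nonneg _)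
  rw [← integral_const_mul M (fun y => ‖f y‖), ← Real.norm_eq_abs]
  exact norm_integral_le_of_norm_le (hf.norm.const_mul M) (ae_of_all _ hpointwise)

theorem integral_norm_le_toReal_of_eLpNorm_one_le {α E : Type*} [MeasurableSpace α]
    [NormedAddCommGroup E] {μ : Measure α} {f : α → E} (hf : AEStronglyMeasurable f μ)
    {c : ℝ≥0∞} (hc : c ≠ ⊤) (hfc : eLpNorm f 1 μ ≤ c) : ∫ y, ‖f y‖ ∂μ ≤ c.toReal := by
  rw [integral_norm_eq_lintegral_enorm hf, ← eLpNorm_one_eq_lintegral_enorm]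
  exact ENNReal.toReal_mono hc hfc

theorem inv_add_mul_rpow_le_div_mul_rpow {Vr Vy V K r t s γ : ℝ} (hVr : 0 ≤ Vr) (hVy : 0 < Vy)
    (hV : 0 < V) (hVK : V ≤ K * Vy) (hr : 0 < r) (hs : 0 < s) (hst : s ≤ t) (hγ : 0 ≤ γ) :
    (Vr + Vy)⁻¹ * (r / (r + t)) ^ γ ≤ K / V * (r / s) ^ γ := by
  have hinv : (Vr + Vy)⁻¹ ≤ K / V := by
    rw [le_div_iff₀ hV, inv_mul_le_iff₀ (by positivity)]
    nlinarith
  have hratio : r / (r + t) ≤ r / s := by gcongr; linarith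
  have hratio_nonneg : 0 ≤ r / (r + t) := div_nonneg hr.le (by linarith)
  exact mul_le_mul hinv (Real.rpow_le_rpow hratio_nonneg hratio hγ)
    (Real.rpow_nonneg hratio_nonneg γ) ((inv_nonneg.2 (by positivity)).trans hinv)

section QuasiMetric

variable {X : Type*} {d : X → X → ℝ} {A0 : ℝ}

theorem le_dist_of_mem_qball_of_notMem_qball (hd_symm : ∀ x y, d x y = d y x)
    (hd_tri : ∀ x y z, d x y ≤ A0 * (d x z + d z y)) (hA0 : 0 < A0) {x₀ x y : X} {r₀ : ℝ}
    (hy : y ∈ qball d x₀ r₀) (hx : x ∉ qball d x₀ (2 * A0 * r₀)) :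
    d x₀ x / (2 * A0) ≤ d x y := by
  simp only [qball, Set.mem_ofPred_eq, not_lt] at hy hx
  have := hd_tri x₀ x y
  rw [hd_symm y x] at this
  rw [div_le_iff₀ (by positivity)]
  nlinarith

theorem qball_subset_qball_of_dist_le (hd_symm : ∀ x y, d x y = d y x)
    (hd_tri : ∀ x y z, d x y ≤ A0 * (d x z + d z y)) (hA0 : 0 < A0) {x₀ x : X} {R : ℝ}
    (hR : d x₀ x ≤ R) : qball d x₀ R ⊆ qball d x (2 * A0 * R) := fun z hz => by
  simp only [qball, Set.mem_ofPred_eq] at hz ⊢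
  have := hd_tri x z x₀
  rw [hd_symm x x₀] at this
  nlinarith

variable [MeasurableSpace X] {μ : Measure X} {Cμ : ℝ}

theorem measure_qball_two_pow_mul_le
    (hdouble : ∀ x r, 0 < r → μ (qball d x (2 * r)) ≤ ENNReal.ofReal Cμ * μ (qball d x r))
    (x : X) (n : ℕ) {s : ℝ} (hs : 0 < s) :
    μ (qball d x (2 ^ n * s)) ≤ ENNReal.ofReal Cμ ^ n * μ (qball d x s) := by
  induction n with
  | zero => simp
  | succ k ih =>
    calc μ (qball d x (2 ^ (k + 1) * s))
        = μ (qball d x (2 * (2 ^ k * s))) := by rw [pow_succ']; ring_nf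
      _ ≤ ENNReal.ofReal Cμ * μ (qball d x (2 ^ k * s)) := hdouble x _ (by positivity)
      _ ≤ ENNReal.ofReal Cμ * (ENNReal.ofReal Cμ ^ k * μ (qball d x s)) := by gcongr
      _ = ENNReal.ofReal Cμ ^ (k + 1) * μ (qball d x s) := by ring

theorem toReal_measure_qball_le_pow_mul (hd_symm : ∀ x y, d x y = d y x)
    (hd_tri : ∀ x y z, d x y ≤ A0 * (d x z + d z y)) (hA0 : 0 < A0) (hC : 0 ≤ Cμ)
    (hdouble : ∀ x r, 0 < r → μ (qball d x (2 * r)) ≤ ENNReal.ofReal Cμ * μ (qball d x r))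
    {n : ℕ} (hn : 4 * A0 ^ 2 ≤ 2 ^ n) {x₀ x : X} (hx : 0 < d x₀ x) {s : ℝ}
    (hs : d x₀ x / (2 * A0) ≤ s) (hfin : μ (qball d x s) ≠ ⊤) :
    (μ (qball d x₀ (d x₀ x))).toReal ≤ Cμ ^ n * (μ (qball d x s)).toReal := by
  have hsub : qball d x₀ (d x₀ x) ⊆ qball d x (2 ^ n * (d x₀ x / (2 * A0))) := by
    refine (qball_subset_qball_of_dist_le hd_symm hd_tri hA0 le_rfl).trans fun z hz => ?_
    simp only [qball, Set.mem_ofPred_eq] at hz ⊢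
    refine hz.trans_le ?_
    rw [mul_div_assoc', le_div_iff₀ (by positivity)]
    nlinarith
  have hle : μ (qball d x₀ (d x₀ x)) ≤ ENNReal.ofReal Cμ ^ n * μ (qball d x s) :=
    calc μ (qball d x₀ (d x₀ x)) ≤ μ (qball d x (2 ^ n * (d x₀ x / (2 * A0)))) :=
          measure_mono hsub
      _ ≤ ENNReal.ofReal Cμ ^ n * μ (qball d x (d x₀ x / (2 * A0))) :=
          measure_qball_two_pow_mul_le hdouble x n (by positivity)
      _ ≤ ENNReal.ofReal Cμ ^ n * μ (qball d x s) :=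
          by gcongr; exact fun z hz => lt_of_lt_of_le hz hs
  have := ENNReal.toReal_mono (by finiteness) hle
  rwa [ENNReal.toReal_mul, ENNReal.toReal_pow, ENNReal.toReal_ofReal hC] at this

end QuasiMetric

theorem stmt6_general {X : Type*} [MeasurableSpace X] (d : X → X → ℝ) (μ : Measure X)
    (A0 : ℝ) (hA0 : 1 ≤ A0)
    (hd_symm : ∀ x y : X, d x y = d y x)
    (hd_tri : ∀ x y z : X, d x y ≤ A0 * (d x z + d z y))
    (hball : ∀ (x : X) (r : ℝ), 0 < r → 0 < μ (qball d x r) ∧ μ (qball d x r) < ⊤)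
    (Cμ : ℝ) (hC : 1 ≤ Cμ)
    (hdouble : ∀ (x : X) (r : ℝ), 0 < r →
      μ (qball d x (2 * r)) ≤ ENNReal.ofReal Cμ * μ (qball d x r))
    (p : ℝ)
    (q : ℝ≥0∞) (hq : 1 ≤ q)
    (β γ : ℝ) (hγ : 0 < γ) :
    ∃ C : ℝ, 0 < C ∧ ∀ (x₀ : X) (r₀ : ℝ), 1 < r₀ →
      ∀ a : X → ℝ, MemLp a q μ →
        Function.support a ⊆ qball d x₀ r₀ →
        eLpNorm a q μ ≤ μ (qball d x₀ r₀) ^ (1 / q.toReal - 1 / p) →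
      ∀ x : X, x ∉ qball d x₀ (2 * A0 * r₀) →
      ∀ (φ : X → ℝ) (r : ℝ), 0 < r → r ≤ 1 →
        (∀ y : X, |φ y| ≤
          ((μ (qball d x r)).toReal + (μ (qball d x (d x y))).toReal)⁻¹
            * (r / (r + d x y)) ^ γ) →
        (∀ y z : X, d y z ≤ (2 * A0)⁻¹ * (r + d x y) →
          |φ y - φ z| ≤ (d y z / (r + d x y)) ^ β
            * ((μ (qball d x r)).toReal + (μ (qball d x (d x y))).toReal)⁻¹
            * (r / (r + d x y)) ^ γ) →
        |∫ y, a y * φ y ∂μ| ≤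
          C * (r / d x₀ x) ^ γ * (μ (qball d x₀ r₀)).toReal ^ (1 - 1 / p)
            / (μ (qball d x₀ (d x₀ x))).toReal := by
  have hA0_pos : 0 < A0 := one_pos.trans_le hA0
  obtain ⟨n, hn⟩ : ∃ n : ℕ, 4 * A0 ^ 2 < 2 ^ n := pow_unbounded_of_one_lt _ one_lt_two
  refine ⟨Cμ ^ n * (2 * A0) ^ γ, by positivity, ?_⟩
  intro x₀ r₀ hr₀ a ha hsupp hnorm x hx φ r hr _ hsize _
  have hd₀ : 0 < d x₀ x :=
    lt_of_lt_of_le (by positivity) (not_lt.1 hx)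
  have hB := hball x₀ r₀ (one_pos.trans hr₀)
  have hV₀ := hball x₀ (d x₀ x) hd₀
  set M := Cμ ^ n / (μ (qball d x₀ (d x₀ x))).toReal * (r / (d x₀ x / (2 * A0))) ^ γ
  have hφ : ∀ y, a y ≠ 0 → |φ y| ≤ M := fun y hy => by
    have hdy := le_dist_of_mem_qball_of_notMem_qball hd_symm hd_tri hA0_pos (hsupp hy) hx
    have hVy := hball x (d x y) (lt_of_lt_of_le (by positivity) hdy)
    exact (hsize y).trans <| inv_add_mul_rpow_le_div_mul_rpow ENNReal.toReal_nonneg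
      (ENNReal.toReal_pos hVy.1.ne' hVy.2.ne) (ENNReal.toReal_pos hV₀.1.ne' hV₀.2.ne)
      (toReal_measure_qball_le_pow_mul hd_symm hd_tri hA0_pos (by linarith) hdouble hn.le hd₀
        hdy hVy.2.ne) hr (by positivity) hdy hγ.le
  have ha_L1 := eLpNorm_one_le_of_support_subset hq ha.1 hsupp hB.1.ne' hB.2.ne hnorm
  have hB_pow_ne_top : μ (qball d x₀ r₀) ^ (1 - 1 / p) ≠ ⊤ :=
    ENNReal.rpow_ne_top_of_ne_zero hB.1.ne' hB.2.ne
  have ha_int : Integrable a μ :=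
    memLp_one_iff_integrable.1 ⟨ha.1, ha_L1.trans_lt hB_pow_ne_top.lt_top⟩
  calc |∫ y, a y * φ y ∂μ| ≤ M * ∫ y, ‖a y‖ ∂μ :=
        abs_integral_mul_le_of_abs_le_on_support ha_int hφ
    _ ≤ M * (μ (qball d x₀ r₀) ^ (1 - 1 / p)).toReal := by
        gcongr
        exact integral_norm_le_toReal_of_eLpNorm_one_le ha.1 hB_pow_ne_top ha_L1
    _ = _ := by
      simp only [M]
      rw [← ENNReal.toReal_rpow, show r / (d x₀ x / (2 * A0)) = 2 * A0 * (r / d x₀ x) by field_simp,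
        Real.mul_rpow (by positivity) (by positivity)]
      ring

/-- Let `a` be a local `(p,q)`-atom supported on `B(x₀,r₀)` with `r₀ > 1`, on a space
of homogeneous type of infinite measure. Then for any `x ∉ B(x₀, 2A₀r₀)` and any test
function `φ ∈ G(x,r,β,γ)` with norm at most `1` for some `r ∈ (0,1]`,
`|∫ a φ dμ| ≤ C (r/d(x₀,x))^γ μ(B)^{1-1/p} / V(x₀,x)`,
with `C` independent of `a`, `x`, `φ` and `r`. -/
theorem stmt6 {X : Type*} [MeasurableSpace X] (d : X → X → ℝ) (μ : Measure X)
    (A0 : ℝ) (hA0 : 1 ≤ A0)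
    (hd_eq : ∀ x y : X, d x y = 0 ↔ x = y)
    (hd_symm : ∀ x y : X, d x y = d y x)
    (hd_nonneg : ∀ x y : X, 0 ≤ d x y)
    (hd_tri : ∀ x y z : X, d x y ≤ A0 * (d x z + d z y))
    (hball : ∀ (x : X) (r : ℝ), 0 < r → 0 < μ (qball d x r) ∧ μ (qball d x r) < ⊤)
    (hXinf : μ Set.univ = ⊤)
    (Cμ : ℝ) (hC : 1 ≤ Cμ)
    (hdouble : ∀ (x : X) (r : ℝ), 0 < r →
      μ (qball d x (2 * r)) ≤ ENNReal.ofReal Cμ * μ (qball d x r))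
    (p : ℝ) (hp0 : 0 < p) (hp1 : p ≤ 1)
    (q : ℝ≥0∞) (hq : 1 ≤ q) (hpq : ENNReal.ofReal p < q)
    (β γ : ℝ) (hβ : 0 < β) (hγ : 0 < γ) :
    ∃ C : ℝ, 0 < C ∧ ∀ (x₀ : X) (r₀ : ℝ), 1 < r₀ →
      ∀ a : X → ℝ, MemLp a q μ →
        Function.support a ⊆ qball d x₀ r₀ →
        eLpNorm a q μ ≤ μ (qball d x₀ r₀) ^ (1 / q.toReal - 1 / p) →
      ∀ x : X, x ∉ qball d x₀ (2 * A0 * r₀) →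
      ∀ (φ : X → ℝ) (r : ℝ), 0 < r → r ≤ 1 →
        (∀ y : X, |φ y| ≤
          ((μ (qball d x r)).toReal + (μ (qball d x (d x y))).toReal)⁻¹
            * (r / (r + d x y)) ^ γ) →
        (∀ y z : X, d y z ≤ (2 * A0)⁻¹ * (r + d x y) →
          |φ y - φ z| ≤ (d y z / (r + d x y)) ^ β
            * ((μ (qball d x r)).toReal + (μ (qball d x (d x y))).toReal)⁻¹
            * (r / (r + d x y)) ^ γ) →
        |∫ y, a y * φ y ∂μ| ≤
          C * (r / d x₀ x) ^ γ * (μ (qball d x₀ r₀)).toReal ^ (1 - 1 / p)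
            / (μ (qball d x₀ (d x₀ x))).toReal :=
  stmt6_general d μ A0 hA0 hd_symm hd_tri hball Cμ hC hdouble p q hq β γ hγ
end

section
/- For any p ∈ (n/(n+1), 1), the local Lipschitz space ℓ_{1/p−1}(ℝⁿ) coincides with the inhomogeneous Lipschitz space lip_{n(1/p−1)}(ℝⁿ), with equivalent norms. -/
open MeasureTheory ENNReal

/-- `f` lies in the inhomogeneous Lipschitz space `lip_α(ℝⁿ)` with norm at most `C`:
`‖f‖_{L^∞} ≤ C` and `|f(x)−f(y)| ≤ C |x−y|^α` for all `x ≠ y`. -/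
def LipBound {n : ℕ} (α C : ℝ) (f : EuclideanSpace ℝ (Fin n) → ℝ) : Prop :=
  (∀ x, |f x| ≤ C) ∧
  (∀ x y, x ≠ y → |f x - f y| ≤ C * dist x y ^ α)

/-- `f` lies in the local Lipschitz space `ℓ_α(ℝⁿ)` with norm at most `C`:
for every ball `B` of radius `≤ 1` the oscillation of `f` on `B` is at most
`C |B|^α`, and for every ball of radius `> 1` one has `|f| ≤ C |B|^α` on `B`. -/
def EllBound {n : ℕ} (α C : ℝ) (f : EuclideanSpace ℝ (Fin n) → ℝ) : Prop :=
  ∀ (x : EuclideanSpace ℝ (Fin n)) (r : ℝ), 0 < r →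
    (r ≤ 1 → ∀ y ∈ Metric.ball x r, ∀ z ∈ Metric.ball x r,
      |f y - f z| ≤ C * (volume (Metric.ball x r)).toReal ^ α) ∧
    (1 < r → ∀ y ∈ Metric.ball x r,
      |f y| ≤ C * (volume (Metric.ball x r)).toReal ^ α)

set_option maxHeartbeats 1000000 in
/-- For any `p ∈ (n/(n+1), 1)`, the local Lipschitz space `ℓ_{1/p−1}(ℝⁿ)` coincides
with the inhomogeneous Lipschitz space `lip_{n(1/p−1)}(ℝⁿ)`, with equivalent norms. -/
theorem stmt12 (n : ℕ) (hn : 0 < n) (p : ℝ)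
    (hp0 : (n : ℝ) / (n + 1) < p) (hp1 : p < 1) :
    ∃ K : ℝ, 0 < K ∧ ∀ (f : EuclideanSpace ℝ (Fin n) → ℝ) (C : ℝ), 0 ≤ C →
      (EllBound (1 / p - 1) C f → LipBound ((n : ℝ) * (1 / p - 1)) (K * C) f) ∧
      (LipBound ((n : ℝ) * (1 / p - 1)) C f → EllBound (1 / p - 1) (K * C) f) := by
  have hn1 : (1:ℝ) ≤ (n:ℝ) := by exact_mod_cast hn
  have hp_pos : 0 < p := lt_trans (by positivity) hp0
  set α : ℝ := 1 / p - 1 with hα_def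
  have hα : 0 < α := by
    have h1 : 1 < 1 / p := by
      rw [lt_div_iff₀ hp_pos]; linarith
    simp only [hα_def]; linarith
  set β : ℝ := (n:ℝ) * α with hβ_def
  have hβ0 : 0 < β := mul_pos (by linarith) hα
  have hβ1 : β ≤ 1 := by
    rw [div_lt_iff₀ (by positivity : (0:ℝ) < (n:ℝ)+1)] at hp0
    have hpinv : (n:ℝ) * (1/p) ≤ (n:ℝ) + 1 := by
      rw [mul_one_div, div_le_iff₀ hp_pos]; nlinarith
    have hb : β = (n:ℝ) * (1/p) - n := by
      simp only [hβ_def, hα_def]; ring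
    linarith
  -- volume of the unit ball
  set v : ℝ := (volume (Metric.ball (0 : EuclideanSpace ℝ (Fin n)) 1)).toReal with hv_def
  haveI : Nontrivial (EuclideanSpace ℝ (Fin n)) := by
    refine ⟨⟨EuclideanSpace.single ⟨0, hn⟩ 1, 0, fun h => ?_⟩⟩
    have h2 := congrArg (fun g => g ⟨0, hn⟩) h
    simp [EuclideanSpace.single_apply] at h2
  have hv : 0 < v := by
    apply ENNReal.toReal_pos
    · exact (Metric.measure_ball_pos volume _ one_pos).ne'
    · exact measure_ball_lt_top.ne
  -- key volume computation
  have volKey : ∀ (x : EuclideanSpace ℝ (Fin n)) (r : ℝ), 0 ≤ r →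
      (volume (Metric.ball x r)).toReal ^ α = r ^ β * v ^ α := by
    intro x r hr
    rw [Measure.addHaar_ball volume x hr]
    simp only [finrank_euclideanSpace, Fintype.card_fin]
    rw [ENNReal.toReal_mul, ENNReal.toReal_ofReal (by positivity), ← hv_def,
      Real.mul_rpow (by positivity) hv.le]
    congr 1
    rw [← Real.rpow_natCast r n, ← Real.rpow_mul hr]
  set vα : ℝ := v ^ α with hvα_def
  have hvα : 0 < vα := Real.rpow_pos_of_pos hv α
  have h2β_le : (2:ℝ) ^ β ≤ 2 := by
    calc (2:ℝ) ^ β ≤ (2:ℝ) ^ (1:ℝ) :=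
          Real.rpow_le_rpow_of_exponent_le one_le_two hβ1
      _ = 2 := Real.rpow_one 2
  have h2β_ge : (1:ℝ) ≤ (2:ℝ) ^ β := by
    calc (1:ℝ) = (2:ℝ) ^ (0:ℝ) := (Real.rpow_zero 2).symm
      _ ≤ (2:ℝ) ^ β := Real.rpow_le_rpow_of_exponent_le one_le_two hβ0.le
  refine ⟨16 * (vα + vα⁻¹), by positivity, ?_⟩
  intro f C hC
  constructor
  · -- Ell → Lip
    intro hE
    -- sup bound
    have hsup : ∀ x, |f x| ≤ C * (2 * vα) := by
      intro x
      have h := (hE x 2 two_pos).2 one_lt_two x (Metric.mem_ball_self two_pos)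
      rw [volKey x 2 (by norm_num)] at h
      calc |f x| ≤ C * (2 ^ β * vα) := h
        _ ≤ C * (2 * vα) := by
            apply mul_le_mul_of_nonneg_left _ hC
            exact mul_le_mul_of_nonneg_right h2β_le hvα.le
    constructor
    · intro x
      calc |f x| ≤ C * (2 * vα) := hsup x
        _ ≤ 16 * (vα + vα⁻¹) * C := by
            nlinarith [mul_nonneg hC hvα.le, mul_nonneg hC (inv_pos.2 hvα).le]
    · intro x y hxy
      set d : ℝ := dist x y with hd_def
      have hd : 0 < d := dist_pos.2 hxy
      have hdβ : 0 < d ^ β := Real.rpow_pos_of_pos hd β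
      rcases le_or_gt d (1/2) with hcase | hcase
      · -- small distance: use ball of radius 2d
        have hr : (0:ℝ) < 2 * d := by linarith
        have h := (hE x (2*d) hr).1 (by linarith) x (Metric.mem_ball_self hr) y
          (by rw [Metric.mem_ball, dist_comm]; linarith)
        rw [volKey x (2*d) hr.le] at h
        have hmul : (2*d) ^ β = 2 ^ β * d ^ β := Real.mul_rpow (by norm_num) hd.le
        calc |f x - f y| ≤ C * ((2*d) ^ β * vα) := h
          _ = C * (2 ^ β * vα) * d ^ β := by rw [hmul]; ring
          _ ≤ 16 * (vα + vα⁻¹) * C * d ^ β := by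
              apply mul_le_mul_of_nonneg_right _ hdβ.le
              nlinarith [mul_nonneg hC hvα.le, mul_nonneg hC (inv_pos.2 hvα).le,
                mul_le_mul_of_nonneg_left
                  (mul_le_mul_of_nonneg_right h2β_le hvα.le) hC]
      · -- large distance: use sup bound
        have hd2 : (1:ℝ)/2 ≤ d ^ β := by
          calc (1:ℝ)/2 = (1/2 : ℝ) ^ (1:ℝ) := by rw [Real.rpow_one]
            _ ≤ (1/2 : ℝ) ^ β :=
                Real.rpow_le_rpow_of_exponent_ge (by norm_num) (by norm_num) hβ1
            _ ≤ d ^ β := Real.rpow_le_rpow (by norm_num) hcase.le hβ0.le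
        have h1 : |f x - f y| ≤ C * (2 * vα) + C * (2 * vα) := by
          calc |f x - f y| ≤ |f x| + |f y| := abs_sub _ _
            _ ≤ C * (2 * vα) + C * (2 * vα) := add_le_add (hsup x) (hsup y)
        calc |f x - f y| ≤ 4 * C * vα := by linarith
          _ = (8 * C * vα) * (1/2) := by ring
          _ ≤ (8 * C * vα) * d ^ β := by
              apply mul_le_mul_of_nonneg_left hd2; positivity
          _ ≤ 16 * (vα + vα⁻¹) * C * d ^ β := by
              apply mul_le_mul_of_nonneg_right _ hdβ.le
              nlinarith [mul_nonneg hC hvα.le, hvα.le, inv_pos.2 hvα]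
  · -- Lip → Ell
    intro hL
    intro x r hr
    have hvol : (volume (Metric.ball x r)).toReal ^ α = r ^ β * vα :=
      volKey x r hr.le
    have hrβ : 0 < r ^ β := Real.rpow_pos_of_pos hr β
    constructor
    · intro hr1 y hy z hz
      rw [hvol]
      rcases eq_or_ne y z with rfl | hyz
      · simp only [sub_self, abs_zero]
        positivity
      · have hdyz : dist y z ≤ 2 * r := by
          have h1 := Metric.mem_ball.1 hy
          have h2 := Metric.mem_ball.1 hz
          calc dist y z ≤ dist y x + dist x z := dist_triangle y x z
            _ ≤ 2 * r := by rw [dist_comm x z] at *; linarith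
        have hkey : dist y z ^ β ≤ 2 * r ^ β := by
          calc dist y z ^ β ≤ (2*r) ^ β :=
              Real.rpow_le_rpow dist_nonneg hdyz hβ0.le
            _ = 2 ^ β * r ^ β := Real.mul_rpow (by norm_num) hr.le
            _ ≤ 2 * r ^ β := mul_le_mul_of_nonneg_right h2β_le hrβ.le
        have h16 : (2:ℝ) ≤ 16 * (vα + vα⁻¹) * vα := by
          nlinarith [mul_inv_cancel₀ hvα.ne', sq_nonneg vα]
        calc |f y - f z| ≤ C * dist y z ^ β := hL.2 y z hyz
          _ ≤ C * (2 * r ^ β) := mul_le_mul_of_nonneg_left hkey hC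
          _ = 2 * (C * r ^ β) := by ring
          _ ≤ (16 * (vα + vα⁻¹) * vα) * (C * r ^ β) :=
              mul_le_mul_of_nonneg_right h16 (mul_nonneg hC hrβ.le)
          _ = 16 * (vα + vα⁻¹) * C * (r ^ β * vα) := by ring
    · intro hr1 y hy
      rw [hvol]
      have hrβ1 : (1:ℝ) ≤ r ^ β := Real.one_le_rpow (by linarith) hβ0.le
      have h16 : (1:ℝ) ≤ 16 * (vα + vα⁻¹) * vα := by
        nlinarith [mul_inv_cancel₀ hvα.ne', sq_nonneg vα]
      have hprod : (1:ℝ) ≤ (16 * (vα + vα⁻¹) * vα) * r ^ β := by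
        nlinarith [h16, hrβ1]
      calc |f y| ≤ C := hL.1 y
        _ = C * 1 := (mul_one C).symm
        _ ≤ C * ((16 * (vα + vα⁻¹) * vα) * r ^ β) :=
            mul_le_mul_of_nonneg_left hprod hC
        _ = 16 * (vα + vα⁻¹) * C * (r ^ β * vα) := by ring
end

section
/- Let p ∈ (ω/(ω+η),1), f ∈ ℓ_{1/p−1}(X), and let a be a local (p,1)-atom on a space of homogeneous type X. Then |∫_X f(x)a(x) dμ(x)| ≤ ‖f‖_{ℓ_{1/p−1}(X)}. -/
open MeasureTheory ENNReal

/-- If `p ∈ (ω/(ω+η),1)`, `f ∈ ℓ_{1/p−1}(X)` with norm at most `L`, and `a` is a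
local `(p,1)`-atom on a space of homogeneous type, then `|∫ f a dμ| ≤ L`. -/
theorem stmt14 {X : Type*} [MeasurableSpace X] (d : X → X → ℝ) (μ : Measure X)
    (A0 : ℝ) (hA0 : 1 ≤ A0)
    (hd_eq : ∀ x y : X, d x y = 0 ↔ x = y)
    (hd_symm : ∀ x y : X, d x y = d y x)
    (hd_nonneg : ∀ x y : X, 0 ≤ d x y)
    (hd_tri : ∀ x y z : X, d x y ≤ A0 * (d x z + d z y))
    (hball : ∀ (x : X) (r : ℝ), 0 < r → 0 < μ (qball d x r) ∧ μ (qball d x r) < ⊤)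
    (Cμ : ℝ) (hC : 1 ≤ Cμ)
    (hdouble : ∀ (x : X) (r : ℝ), 0 < r →
      μ (qball d x (2 * r)) ≤ ENNReal.ofReal Cμ * μ (qball d x r))
    (η : ℝ) (hη : 0 < η ∧ η < 1)
    (p : ℝ) (hp0 : Real.logb 2 Cμ / (Real.logb 2 Cμ + η) < p) (hp1 : p < 1)
    -- `f ∈ ℓ_{1/p-1}(X)` with `‖f‖_{ℓ_{1/p-1}(X)} ≤ L`:
    (f : X → ℝ) (L : ℝ) (hL : 0 ≤ L)
    (hf : ∀ (x : X) (r : ℝ), 0 < r →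
      (r ≤ 1 → ∀ y ∈ qball d x r, ∀ z ∈ qball d x r,
        |f y - f z| ≤ L * (μ (qball d x r)).toReal ^ (1 / p - 1)) ∧
      (1 < r → ∀ y ∈ qball d x r,
        |f y| ≤ L * (μ (qball d x r)).toReal ^ (1 / p - 1)))
    -- `a` is a local `(p,1)`-atom supported on `B(x₀,r₀)`:
    (a : X → ℝ) (ha : Integrable a μ)
    (x₀ : X) (r₀ : ℝ) (hr₀ : 0 < r₀)
    (hsupp : Function.support a ⊆ qball d x₀ r₀)
    (hsize : ∫ x, |a x| ∂μ ≤ (μ (qball d x₀ r₀)).toReal ^ (1 - 1 / p))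
    (hcancel : r₀ ≤ 1 → ∫ x, a x ∂μ = 0) :
    |∫ x, f x * a x ∂μ| ≤ L := by
  by_cases hint : Integrable (fun x => f x * a x) μ
  swap
  · rw [integral_undef hint]; simpa using hL
  set B := qball d x₀ r₀ with hB
  have hx₀B : x₀ ∈ B := by
    simp only [hB, qball, Set.mem_setOf_eq, (hd_eq x₀ x₀).mpr rfl]
    exact hr₀
  have hμB := hball x₀ r₀ hr₀
  have hV : 0 < (μ B).toReal := ENNReal.toReal_pos hμB.1.ne' hμB.2.ne
  set M := L * (μ B).toReal ^ (1 / p - 1) with hM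
  have hM0 : 0 ≤ M := mul_nonneg hL (Real.rpow_nonneg hV.le _)
  have hML : M * (μ B).toReal ^ (1 - 1 / p) = L := by
    have h0 : (1 / p - 1) + (1 - 1 / p) = 0 := by ring
    rw [hM, mul_assoc, ← Real.rpow_add hV, h0, Real.rpow_zero, mul_one]
  have key : ∀ g : X → ℝ, Integrable (fun x => g x * a x) μ →
      (∀ x ∈ B, |g x| ≤ M) → |∫ x, g x * a x ∂μ| ≤ L := by
    intro g hg hgb
    have hpt : ∀ x, |g x * a x| ≤ M * |a x| := by
      intro x
      by_cases hax : a x = 0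
      · simp [hax, mul_nonneg hM0 (abs_nonneg (a x))]
      · rw [abs_mul]
        exact mul_le_mul_of_nonneg_right (hgb x (hsupp hax)) (abs_nonneg _)
    calc |∫ x, g x * a x ∂μ| ≤ ∫ x, |g x * a x| ∂μ := by simpa only [Real.norm_eq_abs] using norm_integral_le_integral_norm (μ := μ) (fun x => g x * a x)
      _ ≤ ∫ x, M * |a x| ∂μ := integral_mono hg.abs ((ha.abs).const_mul M) hpt
      _ = M * ∫ x, |a x| ∂μ := integral_const_mul M _
      _ ≤ M * (μ B).toReal ^ (1 - 1 / p) := mul_le_mul_of_nonneg_left hsize hM0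
      _ = L := hML
  by_cases hr1 : r₀ ≤ 1
  · have hgint : Integrable (fun x => (f x - f x₀) * a x) μ := by
      have : (fun x => (f x - f x₀) * a x) = fun x => f x * a x - f x₀ * a x := by
        funext x; ring
      rw [this]
      exact hint.sub (ha.const_mul (f x₀))
    have hbd : ∀ x ∈ B, |f x - f x₀| ≤ M := fun x hx =>
      (hf x₀ r₀ hr₀).1 hr1 x hx x₀ hx₀B
    have heq : ∫ x, (f x - f x₀) * a x ∂μ = ∫ x, f x * a x ∂μ := by
      have : (fun x => (f x - f x₀) * a x) = fun x => f x * a x - f x₀ * a x := by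
        funext x; ring
      rw [this, integral_sub hint (ha.const_mul (f x₀)), integral_const_mul,
        hcancel hr1, mul_zero, sub_zero]
    have := key (fun x => f x - f x₀) hgint hbd
    rwa [heq] at this
  · exact key f hint fun x hx => (hf x₀ r₀ hr₀).2 (lt_of_not_ge hr1) x hx
end

section
/- Let (X,d,μ) be a space of homogeneous type, p ∈ (0,1), β,γ ∈ (ω(1/p−1), η), and fix x₀ ∈ X. If f ∈ G(x₀,1,β,γ) with ‖f‖_{G(x₀,1,β,γ)} ≤ 1, then f is, up to a harmless constant depending only on the structural constants, a local (p,∞,ε⃗)-molecule centered at B(x₀,2), with ε_m := δ^{m[γ−ω(1/p−1)]}; in particular ‖f‖_{L^∞(X)} ≤ C [μ(B(x₀,2))]^{−1/p} and for each m ∈ ℕ, ‖f 1_{B(x₀,2δ^{−m})∖B(x₀,2δ^{−m+1})}‖_{L^∞} ≤ C ε_m [μ(B(x₀,2δ^{−m}))]^{−1/p}. -/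
open MeasureTheory ENNReal

lemma qball_subset {X : Type*} (d : X → X → ℝ) (x : X) {r s : ℝ} (h : r ≤ s) :
    qball d x r ⊆ qball d x s := fun _ hy => lt_of_lt_of_le hy h

lemma iter_double {X : Type*} [MeasurableSpace X] (d : X → X → ℝ) (μ : Measure X)
    (Cμ : ℝ) (hC : 1 ≤ Cμ)
    (hdouble : ∀ (x : X) (r : ℝ), 0 < r →
      μ (qball d x (2 * r)) ≤ ENNReal.ofReal Cμ * μ (qball d x r))
    (x : X) : ∀ (n : ℕ) (r : ℝ), 0 < r →
      μ (qball d x (2 ^ n * r)) ≤ ENNReal.ofReal (Cμ ^ n) * μ (qball d x r) := by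
  intro n
  induction n with
  | zero => intro r hr; simp
  | succ n ih =>
    intro r hr
    have h1 : (2:ℝ) ^ (n+1) * r = 2 * (2 ^ n * r) := by ring
    rw [h1]
    calc μ (qball d x (2 * (2 ^ n * r)))
        ≤ ENNReal.ofReal Cμ * μ (qball d x (2 ^ n * r)) :=
          hdouble x _ (by positivity)
      _ ≤ ENNReal.ofReal Cμ * (ENNReal.ofReal (Cμ ^ n) * μ (qball d x r)) :=
          mul_le_mul_right (ih r hr) _
      _ = ENNReal.ofReal (Cμ ^ (n+1)) * μ (qball d x r) := by
          rw [← mul_assoc, ← ENNReal.ofReal_mul (by linarith)]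
          congr 2
          ring

lemma doubling_bound {X : Type*} [MeasurableSpace X] (d : X → X → ℝ) (μ : Measure X)
    (Cμ : ℝ) (hC : 1 ≤ Cμ)
    (hdouble : ∀ (x : X) (r : ℝ), 0 < r →
      μ (qball d x (2 * r)) ≤ ENNReal.ofReal Cμ * μ (qball d x r))
    (x : X) {r R : ℝ} (hr : 0 < r) (hrR : r ≤ R) :
    μ (qball d x R) ≤ ENNReal.ofReal (Cμ * (R / r) ^ Real.logb 2 Cμ) * μ (qball d x r) := by
  set ω := Real.logb 2 Cμ with hωdef
  have hω : 0 ≤ ω := Real.logb_nonneg one_lt_two hC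
  have ht : 1 ≤ R / r := (one_le_div hr).mpr hrR
  set n := ⌈Real.logb 2 (R / r)⌉₊ with hn
  have hlog0 : 0 ≤ Real.logb 2 (R / r) := Real.logb_nonneg one_lt_two ht
  have hRn : R ≤ 2 ^ n * r := by
    have h2 : R / r = (2:ℝ) ^ Real.logb 2 (R/r) :=
      (Real.rpow_logb two_pos (by norm_num) (by linarith)).symm
    have h3 : (2:ℝ) ^ Real.logb 2 (R/r) ≤ (2:ℝ) ^ (n:ℝ) :=
      Real.rpow_le_rpow_of_exponent_le one_le_two (Nat.le_ceil _)
    have h4 : ((2:ℝ) ^ (n:ℝ)) = (2:ℝ) ^ n := Real.rpow_natCast 2 n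
    have h5 : R / r ≤ 2 ^ n := by rw [h2, ← h4]; exact h3
    calc R = (R / r) * r := by field_simp
      _ ≤ 2 ^ n * r := mul_le_mul_of_nonneg_right h5 hr.le
  have hCn : Cμ ^ n ≤ Cμ * (R/r) ^ ω := by
    have hCeq : Cμ = (2:ℝ) ^ ω :=
      (Real.rpow_logb two_pos (by norm_num) (by linarith)).symm
    have h1 : (Cμ:ℝ) ^ n = (2:ℝ) ^ (ω * n) := by
      rw [Real.rpow_mul (by norm_num : (0:ℝ) ≤ 2), ← hCeq, Real.rpow_natCast]
    have hceil : (n:ℝ) < Real.logb 2 (R/r) + 1 := Nat.ceil_lt_add_one hlog0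
    have h2 : ω * n ≤ ω * (Real.logb 2 (R/r) + 1) := by nlinarith
    have h3 : (2:ℝ) ^ (ω * (n:ℝ)) ≤ (2:ℝ) ^ (ω * (Real.logb 2 (R/r) + 1)) :=
      Real.rpow_le_rpow_of_exponent_le one_le_two h2
    have h4 : (2:ℝ) ^ (ω * (Real.logb 2 (R/r) + 1)) = Cμ * (R/r) ^ ω := by
      rw [mul_add, mul_one, Real.rpow_add two_pos,
        mul_comm ω (Real.logb 2 (R/r)), Real.rpow_mul (by norm_num : (0:ℝ) ≤ 2),
        Real.rpow_logb two_pos (by norm_num) (by linarith : (0:ℝ) < R/r), ← hCeq]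
      ring
    rw [h1]
    rw [h4] at h3
    exact h3
  calc μ (qball d x R) ≤ μ (qball d x (2 ^ n * r)) := measure_mono (qball_subset d x hRn)
    _ ≤ ENNReal.ofReal (Cμ ^ n) * μ (qball d x r) := iter_double d μ Cμ hC hdouble x n r hr
    _ ≤ ENNReal.ofReal (Cμ * (R/r) ^ ω) * μ (qball d x r) :=
        mul_le_mul_left (ENNReal.ofReal_le_ofReal hCn) _


/-- A test function `f ∈ G(x₀,1,β,γ)` with `‖f‖ ≤ 1` is (up to a harmless constant)
a local `(p,∞,ε⃗)`-molecule centered at `B(x₀,2)` with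
`ε_m := δ^{m[γ−ω(1/p−1)]}`: one has `‖f‖_{L^∞} ≤ C μ(B(x₀,2))^{−1/p}` and, for each
`m ≥ 1`, `|f| ≤ C ε_m μ(B(x₀,2δ^{−m}))^{−1/p}` on the annulus
`B(x₀,2δ^{−m}) ∖ B(x₀,2δ^{−m+1})`. -/
theorem stmt17 {X : Type*} [MeasurableSpace X] (d : X → X → ℝ) (μ : Measure X)
    (A0 : ℝ) (hA0 : 1 ≤ A0)
    (hd_eq : ∀ x y : X, d x y = 0 ↔ x = y)
    (hd_symm : ∀ x y : X, d x y = d y x)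
    (hd_nonneg : ∀ x y : X, 0 ≤ d x y)
    (hd_tri : ∀ x y z : X, d x y ≤ A0 * (d x z + d z y))
    (hball : ∀ (x : X) (r : ℝ), 0 < r → 0 < μ (qball d x r) ∧ μ (qball d x r) < ⊤)
    (Cμ : ℝ) (hC : 1 ≤ Cμ)
    (hdouble : ∀ (x : X) (r : ℝ), 0 < r →
      μ (qball d x (2 * r)) ≤ ENNReal.ofReal Cμ * μ (qball d x r))
    (η : ℝ) (hη : 0 < η ∧ η < 1)
    (δ : ℝ) (hδ0 : 0 < δ) (hδ1 : δ < 1)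
    (p : ℝ) (hp0 : 0 < p) (hp1 : p < 1)
    (β γ : ℝ) (hβ : Real.logb 2 Cμ * (1 / p - 1) < β ∧ β < η)
    (hγ : Real.logb 2 Cμ * (1 / p - 1) < γ ∧ γ < η)
    (x₀ : X) (f : X → ℝ)
    -- the size condition of `G(x₀,1,β,γ)` with constant `1`:
    (hsize : ∀ x : X, |f x| ≤
      ((μ (qball d x₀ 1)).toReal + (μ (qball d x₀ (d x₀ x))).toReal)⁻¹
        * (1 / (1 + d x₀ x)) ^ γ)
    -- the regularity condition of `G(x₀,1,β,γ)` with constant `1`: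
    (hreg : ∀ x y : X, d x y ≤ (2 * A0)⁻¹ * (1 + d x₀ x) →
      |f x - f y| ≤ (d x y / (1 + d x₀ x)) ^ β
        * ((μ (qball d x₀ 1)).toReal + (μ (qball d x₀ (d x₀ x))).toReal)⁻¹
        * (1 / (1 + d x₀ x)) ^ γ) :
    ∃ C : ℝ, 0 < C ∧
      (∀ x : X, |f x| ≤ C * (μ (qball d x₀ 2)).toReal ^ (-(1 / p))) ∧
      (∀ m : ℕ, 1 ≤ m →
        ∀ x ∈ qball d x₀ (2 * δ ^ (-(m : ℝ))) \ qball d x₀ (2 * δ ^ (-(m : ℝ) + 1)),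
          |f x| ≤ C * δ ^ ((m : ℝ) * (γ - Real.logb 2 Cμ * (1 / p - 1)))
            * (μ (qball d x₀ (2 * δ ^ (-(m : ℝ))))).toReal ^ (-(1 / p))) := by
  set ω := Real.logb 2 Cμ with hωdef
  have hω : 0 ≤ ω := Real.logb_nonneg one_lt_two hC
  have hC0 : (0:ℝ) < Cμ := lt_of_lt_of_le one_pos hC
  have hVpos : ∀ r : ℝ, 0 < r → 0 < (μ (qball d x₀ r)).toReal := fun r hr =>
    ENNReal.toReal_pos (hball x₀ r hr).1.ne' (hball x₀ r hr).2.ne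
  have hVmono : ∀ r s : ℝ, 0 < r → r ≤ s →
      (μ (qball d x₀ r)).toReal ≤ (μ (qball d x₀ s)).toReal := fun r s hr hrs =>
    ENNReal.toReal_mono (hball x₀ s (lt_of_lt_of_le hr hrs)).2.ne
      (measure_mono (qball_subset d x₀ hrs))
  have hVd : ∀ r R : ℝ, 0 < r → r ≤ R →
      (μ (qball d x₀ R)).toReal ≤ Cμ * (R / r) ^ ω * (μ (qball d x₀ r)).toReal := by
    intro r R hr hrR
    have h := doubling_bound d μ Cμ hC hdouble x₀ hr hrR
    have hKnn : 0 ≤ Cμ * (R / r) ^ ω :=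
      mul_nonneg hC0.le (Real.rpow_nonneg (div_nonneg (by linarith) hr.le) _)
    have hfin : ENNReal.ofReal (Cμ * (R / r) ^ ω) * μ (qball d x₀ r) ≠ ⊤ :=
      ENNReal.mul_ne_top ENNReal.ofReal_ne_top (hball x₀ r hr).2.ne
    have h2 := ENNReal.toReal_mono hfin h
    rwa [ENNReal.toReal_mul, ENNReal.toReal_ofReal hKnn] at h2
  have he : 0 < 1/p - 1 := by
    have := one_lt_one_div hp0 hp1
    linarith
  have hγ0 : 0 ≤ γ := by nlinarith [hγ.1, mul_nonneg hω he.le]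
  have hV1 := hVpos 1 one_pos
  have hV2 := hVpos 2 two_pos
  set C₁ := ((μ (qball d x₀ 1)).toReal)⁻¹ * ((μ (qball d x₀ 2)).toReal) ^ (1/p) with hC₁
  set C₂ := δ ^ (-γ) * (Cμ * (δ⁻¹) ^ ω)
    * (Cμ ^ (1/p-1) * ((μ (qball d x₀ 2)).toReal) ^ (1/p-1)) with hC₂
  have hC₁pos : 0 < C₁ := mul_pos (inv_pos.mpr hV1) (Real.rpow_pos_of_pos hV2 _)
  have hC₂pos : 0 < C₂ := by
    apply mul_pos (mul_pos (Real.rpow_pos_of_pos hδ0 _)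
      (mul_pos hC0 (Real.rpow_pos_of_pos (inv_pos.mpr hδ0) _)))
    exact mul_pos (Real.rpow_pos_of_pos hC0 _) (Real.rpow_pos_of_pos hV2 _)
  refine ⟨C₁ + C₂, by linarith, ?_, ?_⟩
  · intro x
    have hdx := hd_nonneg x₀ x
    have h1 : ((μ (qball d x₀ 1)).toReal + (μ (qball d x₀ (d x₀ x))).toReal)⁻¹
        ≤ ((μ (qball d x₀ 1)).toReal)⁻¹ := by
      apply inv_anti₀ hV1
      have : (0:ℝ) ≤ (μ (qball d x₀ (d x₀ x))).toReal := ENNReal.toReal_nonneg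
      linarith
    have h2 : (1 / (1 + d x₀ x)) ^ γ ≤ 1 :=
      Real.rpow_le_one (div_nonneg zero_le_one (by linarith))
        (by rw [div_le_one (by linarith)]; linarith) hγ0
    have h3 : |f x| ≤ ((μ (qball d x₀ 1)).toReal)⁻¹ := by
      calc |f x| ≤ _ := hsize x
        _ ≤ ((μ (qball d x₀ 1)).toReal)⁻¹ * 1 :=
            mul_le_mul h1 h2 (Real.rpow_nonneg (div_nonneg zero_le_one (by linarith)) _)
              (by positivity)
        _ = _ := mul_one _
    have key : C₁ * ((μ (qball d x₀ 2)).toReal) ^ (-(1/p)) = ((μ (qball d x₀ 1)).toReal)⁻¹ := by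
      rw [hC₁, mul_assoc, ← Real.rpow_add hV2, show 1/p + -(1/p) = 0 by ring,
        Real.rpow_zero, mul_one]
    have hnn : 0 ≤ C₂ * ((μ (qball d x₀ 2)).toReal) ^ (-(1/p)) :=
      mul_nonneg hC₂pos.le (Real.rpow_nonneg ENNReal.toReal_nonneg _)
    have hadd : (C₁ + C₂) * ((μ (qball d x₀ 2)).toReal) ^ (-(1/p))
        = C₁ * ((μ (qball d x₀ 2)).toReal) ^ (-(1/p))
          + C₂ * ((μ (qball d x₀ 2)).toReal) ^ (-(1/p)) := add_mul _ _ _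
    rw [hadd, key]
    linarith
  · intro m hm x hx
    obtain ⟨hx1, hx2⟩ := hx
    have hdx0 : (0:ℝ) ≤ d x₀ x := hd_nonneg x₀ x
    have hm1 : (1:ℝ) ≤ (m:ℝ) := by exact_mod_cast hm
    have hδm : (0:ℝ) < δ ^ (-(m:ℝ)) := Real.rpow_pos_of_pos hδ0 _
    have hδm1 : (0:ℝ) < δ ^ (-(m:ℝ)+1) := Real.rpow_pos_of_pos hδ0 _
    have hone_le_δm1 : (1:ℝ) ≤ δ ^ (-(m:ℝ)+1) :=
      Real.one_le_rpow_of_pos_of_le_one_of_nonpos hδ0 hδ1.le (by linarith)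
    have hone_le_δm : (1:ℝ) ≤ δ ^ (-(m:ℝ)) :=
      Real.one_le_rpow_of_pos_of_le_one_of_nonpos hδ0 hδ1.le (by linarith)
    have hδm1_le : δ ^ (-(m:ℝ)+1) ≤ δ ^ (-(m:ℝ)) :=
      Real.rpow_le_rpow_of_exponent_ge hδ0 hδ1.le (by linarith)
    have hdm1_le_dx : 2 * δ ^ (-(m:ℝ)+1) ≤ d x₀ x := not_lt.mp hx2
    have hdx_lt : d x₀ x < 2 * δ ^ (-(m:ℝ)) := hx1
    have hdxpos : 0 < d x₀ x := lt_of_lt_of_le (by linarith) hdm1_le_dx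
    -- step B: inverse-measure factor
    have hB : ((μ (qball d x₀ 1)).toReal + (μ (qball d x₀ (d x₀ x))).toReal)⁻¹
        ≤ ((μ (qball d x₀ (2 * δ ^ (-(m:ℝ)+1)))).toReal)⁻¹ := by
      apply inv_anti₀ (hVpos _ (by linarith))
      have h1 := hVmono (2 * δ ^ (-(m:ℝ)+1)) (d x₀ x) (by linarith) hdm1_le_dx
      have h2 : (0:ℝ) ≤ (μ (qball d x₀ 1)).toReal := ENNReal.toReal_nonneg
      linarith
    have hratio : (2 * δ ^ (-(m:ℝ))) / (2 * δ ^ (-(m:ℝ)+1)) = δ⁻¹ := by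
      rw [Real.rpow_add hδ0, Real.rpow_one]
      field_simp
    have hK := hVd (2 * δ ^ (-(m:ℝ)+1)) (2 * δ ^ (-(m:ℝ))) (by linarith) (by linarith)
    rw [hratio] at hK
    have hBK : ((μ (qball d x₀ (2 * δ ^ (-(m:ℝ)+1)))).toReal)⁻¹
        ≤ Cμ * δ⁻¹ ^ ω * ((μ (qball d x₀ (2 * δ ^ (-(m:ℝ))))).toReal)⁻¹ := by
      have hv1 := hVpos (2 * δ ^ (-(m:ℝ)+1)) (by linarith)
      have hv2 := hVpos (2 * δ ^ (-(m:ℝ))) (by linarith)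
      rw [inv_eq_one_div, ← div_eq_mul_inv, div_le_div_iff₀ hv1 hv2]
      nlinarith
    have hpowfac : (1 / (1 + d x₀ x)) ^ γ ≤ δ ^ ((m:ℝ)*γ) * δ ^ (-γ) := by
      have h1 : 1 / (1 + d x₀ x) ≤ δ ^ ((m:ℝ)-1) := by
        have e1 : δ ^ ((m:ℝ)-1) = (δ ^ (-(m:ℝ)+1))⁻¹ := by
          rw [← Real.rpow_neg hδ0.le]
          congr 1; ring
        rw [e1, inv_eq_one_div]
        apply one_div_le_one_div_of_le hδm1
        linarith
      calc (1 / (1 + d x₀ x)) ^ γ ≤ (δ ^ ((m:ℝ)-1)) ^ γ :=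
            Real.rpow_le_rpow (div_nonneg zero_le_one (by linarith)) h1 hγ0
        _ = δ ^ (((m:ℝ)-1)*γ) := (Real.rpow_mul hδ0.le _ _).symm
        _ = δ ^ ((m:ℝ)*γ) * δ ^ (-γ) := by
            rw [← Real.rpow_add hδ0]; congr 1; ring
    have hsplitV : ((μ (qball d x₀ (2 * δ ^ (-(m:ℝ))))).toReal)⁻¹
        = ((μ (qball d x₀ (2 * δ ^ (-(m:ℝ))))).toReal) ^ (1/p-1)
          * ((μ (qball d x₀ (2 * δ ^ (-(m:ℝ))))).toReal) ^ (-(1/p)) := by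
      rw [← Real.rpow_add (hVpos _ (by linarith)),
        show 1/p-1 + -(1/p) = -1 by ring, Real.rpow_neg_one]
    have hhalf : (2 * δ ^ (-(m:ℝ))) / 2 = δ ^ (-(m:ℝ)) := by ring
    have hVDm_le : (μ (qball d x₀ (2 * δ ^ (-(m:ℝ))))).toReal
        ≤ Cμ * (δ ^ (-(m:ℝ))) ^ ω * (μ (qball d x₀ 2)).toReal := by
      have := hVd 2 (2 * δ ^ (-(m:ℝ))) two_pos (by linarith)
      rwa [hhalf] at this
    have hVe : ((μ (qball d x₀ (2 * δ ^ (-(m:ℝ))))).toReal) ^ (1/p-1)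
        ≤ Cμ ^ (1/p-1) * δ ^ (-((m:ℝ) * (ω * (1/p-1))))
          * ((μ (qball d x₀ 2)).toReal) ^ (1/p-1) := by
      have h1 : ((μ (qball d x₀ (2 * δ ^ (-(m:ℝ))))).toReal) ^ (1/p-1)
          ≤ (Cμ * (δ ^ (-(m:ℝ))) ^ ω * (μ (qball d x₀ 2)).toReal) ^ (1/p-1) :=
        Real.rpow_le_rpow ENNReal.toReal_nonneg hVDm_le he.le
      have h2 : (Cμ * (δ ^ (-(m:ℝ))) ^ ω * (μ (qball d x₀ 2)).toReal) ^ (1/p-1)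
          = Cμ ^ (1/p-1) * ((δ ^ (-(m:ℝ))) ^ ω) ^ (1/p-1)
            * ((μ (qball d x₀ 2)).toReal) ^ (1/p-1) := by
        rw [Real.mul_rpow (mul_nonneg hC0.le (Real.rpow_nonneg hδm.le _))
          ENNReal.toReal_nonneg, Real.mul_rpow hC0.le (Real.rpow_nonneg hδm.le _)]
      have h3 : ((δ ^ (-(m:ℝ))) ^ ω) ^ (1/p-1) = δ ^ (-((m:ℝ) * (ω * (1/p-1)))) := by
        rw [← Real.rpow_mul hδ0.le, ← Real.rpow_mul hδ0.le]
        congr 1; ring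
      rw [h2, h3] at h1
      exact h1
    have hnnpow : (0:ℝ) ≤ δ ^ ((m:ℝ)*γ) * δ ^ (-γ) :=
      mul_nonneg (Real.rpow_nonneg hδ0.le _) (Real.rpow_nonneg hδ0.le _)
    have hmain : |f x| ≤ (Cμ * δ⁻¹ ^ ω) * (δ ^ ((m:ℝ)*γ) * δ ^ (-γ))
        * ((Cμ ^ (1/p-1) * δ ^ (-((m:ℝ) * (ω * (1/p-1))))
            * ((μ (qball d x₀ 2)).toReal) ^ (1/p-1))
          * ((μ (qball d x₀ (2 * δ ^ (-(m:ℝ))))).toReal) ^ (-(1/p))) := by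
      calc |f x|
          ≤ ((μ (qball d x₀ 1)).toReal + (μ (qball d x₀ (d x₀ x))).toReal)⁻¹
            * (1 / (1 + d x₀ x)) ^ γ := hsize x
        _ ≤ ((μ (qball d x₀ (2 * δ ^ (-(m:ℝ)+1)))).toReal)⁻¹
            * (δ ^ ((m:ℝ)*γ) * δ ^ (-γ)) :=
            mul_le_mul hB hpowfac
              (Real.rpow_nonneg (div_nonneg zero_le_one (by linarith)) _)
              (inv_nonneg.mpr ENNReal.toReal_nonneg)
        _ ≤ (Cμ * δ⁻¹ ^ ω * ((μ (qball d x₀ (2 * δ ^ (-(m:ℝ))))).toReal)⁻¹)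
            * (δ ^ ((m:ℝ)*γ) * δ ^ (-γ)) :=
            mul_le_mul_of_nonneg_right hBK hnnpow
        _ = (Cμ * δ⁻¹ ^ ω) * (δ ^ ((m:ℝ)*γ) * δ ^ (-γ))
            * (((μ (qball d x₀ (2 * δ ^ (-(m:ℝ))))).toReal) ^ (1/p-1)
              * ((μ (qball d x₀ (2 * δ ^ (-(m:ℝ))))).toReal) ^ (-(1/p))) := by
            rw [hsplitV]; ring
        _ ≤ _ := by
            apply mul_le_mul_of_nonneg_left
              (mul_le_mul_of_nonneg_right hVe (Real.rpow_nonneg ENNReal.toReal_nonneg _))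
            exact mul_nonneg
              (mul_nonneg hC0.le (Real.rpow_nonneg (inv_nonneg.mpr hδ0.le) _)) hnnpow
    have hfinal_eq : C₂ * δ ^ ((m:ℝ) * (γ - ω * (1/p-1)))
          * ((μ (qball d x₀ (2 * δ ^ (-(m:ℝ))))).toReal) ^ (-(1/p))
        = (Cμ * δ⁻¹ ^ ω) * (δ ^ ((m:ℝ)*γ) * δ ^ (-γ))
          * ((Cμ ^ (1/p-1) * δ ^ (-((m:ℝ) * (ω * (1/p-1))))
              * ((μ (qball d x₀ 2)).toReal) ^ (1/p-1))
            * ((μ (qball d x₀ (2 * δ ^ (-(m:ℝ))))).toReal) ^ (-(1/p))) := by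
      rw [hC₂, show (m:ℝ)*(γ - ω*(1/p-1)) = (m:ℝ)*γ + (-((m:ℝ)*(ω*(1/p-1)))) by ring,
        Real.rpow_add hδ0]
      ring
    rw [← hfinal_eq] at hmain
    have hnn2 : (0:ℝ) ≤ δ ^ ((m:ℝ) * (γ - ω * (1/p-1)))
        * ((μ (qball d x₀ (2 * δ ^ (-(m:ℝ))))).toReal) ^ (-(1/p)) :=
      mul_nonneg (Real.rpow_nonneg hδ0.le _) (Real.rpow_nonneg ENNReal.toReal_nonneg _)
    calc |f x| ≤ C₂ * δ ^ ((m:ℝ) * (γ - ω * (1/p-1)))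
          * ((μ (qball d x₀ (2 * δ ^ (-(m:ℝ))))).toReal) ^ (-(1/p)) := hmain
      _ ≤ (C₁ + C₂) * δ ^ ((m:ℝ) * (γ - ω * (1/p-1)))
          * ((μ (qball d x₀ (2 * δ ^ (-(m:ℝ))))).toReal) ^ (-(1/p)) := by
          exact mul_le_mul_of_nonneg_right (mul_le_mul_of_nonneg_right
            (show C₂ ≤ C₁ + C₂ by linarith) (Real.rpow_nonneg hδ0.le _))
            (Real.rpow_nonneg ENNReal.toReal_nonneg _)
end

section
/- Let {Q_k}_{k≥0} be a family of kernels on a space of homogeneous type satisfying, uniformly in k: size |Q̃_k(x,y)| ≤ C [V_{δ^k}(x)+V(x,y)]^{-1}[δ^k/(δ^k+d(x,y))]^γ, Hölder regularity of order β in the first variable, and ∫ Q̃_k(x,y)dμ(y) = 0 for k > N. Fix η' ∈ (0, β∧γ). Then for any x,y ∈ X, k,l ∈ ℤ₊ with l > N and k ≤ l, and any φ ∈ G(x,δ^l,β,γ) with ∫φ dμ = 0 and ‖φ‖_{G(x,δ^l,β,γ)} ≤ 1, one has |∫ Q̃_k(z,y)φ(z)dμ(z)| ≤ C₁ δ^{(l−k)η'}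 [V_{δ^k}(x)+V(x,y)]^{-1}[δ^k/(δ^k+d(x,y))]^γ. -/
open MeasureTheory ENNReal

/-!
By the cancellation of `φ`, `∫ Q(z,y) φ(z) dμ(z) = ∫ (Q(z,y) - Q(x,y)) φ(z) dμ(z)`. Where
`d(x,z) ≤ (2A₀)⁻¹ (δ^k + d(x,y))`, the Hölder regularity of `Q` in its first variable bounds the
difference by `(d(x,z)/δ^k)^η' = (d(x,z)/δ^l)^η' δ^((l-k)η')` times the size of `Q(x,·)` at `y`.
Elsewhere `z` is far from `x` at scale `δ^k`, and `|Q(z,y) - Q(x,y)| ≤ |Q(z,y)| + |Q(x,y)|`: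
against `|Q(z,y)|` the decay of `φ` supplies both the gain `δ^((l-k)η')` and the size at `(x,y)`;
against `|Q(x,y)|` it supplies the gain by spending only `η'` of its exponent `γ`, so what is left
stays integrable. The remaining integrals of size profiles are bounded uniformly in the centre and
the scale by summing over dyadic annuli with the doubling property.
-/

theorem rpow_div_le_rpow_mul_rpow {D E r s β η : ℝ} (hD : 0 ≤ D) (hE : 0 ≤ E) (hs : 0 < s)
    (hr : 0 < r) (hDr : D ≤ r + E) (hη : 0 ≤ η) (hηβ : η ≤ β) :
    (D / (r + E)) ^ β ≤ (D / s) ^ η * (s / r) ^ η :=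
  calc (D / (r + E)) ^ β ≤ (D / (r + E)) ^ η :=
        Real.rpow_le_rpow_of_exponent_ge' (by positivity)
          ((div_le_one (by positivity)).mpr hDr) hη hηβ
    _ ≤ (D / r) ^ η :=
        Real.rpow_le_rpow (by positivity) (div_le_div_of_nonneg_left hD hr (by linarith)) hη
    _ = (D / s) ^ η * (s / r) ^ η := by
        rw [← Real.mul_rpow (by positivity) (by positivity), div_mul_div_cancel₀ hs.ne']

theorem div_add_le_of_inv_mul_lt {A s r D E : ℝ} (hA : 0 < A) (hs : 0 < s) (hr : 0 < r)
    (hE : 0 ≤ E) (h : A⁻¹ * (r + E) < D) : s / (s + D) ≤ A * (s / r) * (r / (r + E)) := by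
  have hpos : 0 < A⁻¹ * (r + E) := by positivity
  calc s / (s + D) ≤ s / (A⁻¹ * (r + E)) :=
        div_le_div_of_nonneg_left hs.le hpos (by linarith)
    _ = A * (s / r) * (r / (r + E)) := by field_simp

theorem rpow_div_add_le_of_two_pow_mul_le {ρ D b : ℝ} {m : ℕ} (hρ : 0 < ρ) (hD : 0 ≤ D)
    (hb : 0 ≤ b) (h : 2 ^ m * ρ ≤ 2 * max ρ D) :
    (ρ / (ρ + D)) ^ b ≤ 2 ^ b * ((2 : ℝ) ^ (-b)) ^ m := by
  have hbase : ρ / (ρ + D) ≤ 2 * ((2 : ℝ) ^ m)⁻¹ := by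
    rw [div_le_iff₀ (by linarith)]
    calc ρ = ((2 : ℝ) ^ m)⁻¹ * (2 ^ m * ρ) := by field_simp
      _ ≤ ((2 : ℝ) ^ m)⁻¹ * (2 * (ρ + D)) :=
          mul_le_mul_of_nonneg_left (by linarith [max_le_add_of_nonneg hρ.le hD]) (by positivity)
      _ = 2 * ((2 : ℝ) ^ m)⁻¹ * (ρ + D) := by ring
  calc (ρ / (ρ + D)) ^ b ≤ (2 * ((2 : ℝ) ^ m)⁻¹) ^ b :=
        Real.rpow_le_rpow (by positivity) hbase hb
    _ = 2 ^ b * ((2 : ℝ) ^ (-b)) ^ m := by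
        rw [Real.mul_rpow (by norm_num) (by positivity), ← Real.rpow_natCast,
          ← Real.rpow_natCast, Real.inv_rpow (by positivity), ← Real.rpow_mul (by norm_num),
          ← Real.rpow_mul (by norm_num), neg_mul, Real.rpow_neg zero_le_two, mul_comm (m : ℝ) b]

theorem exists_two_pow_mul_scale {ρ : ℝ} (hρ : 0 < ρ) (t : ℝ) :
    ∃ m : ℕ, t < 2 ^ m * ρ ∧ 2 ^ m * ρ ≤ 2 * max ρ t := by
  have hex : ∃ m : ℕ, t < 2 ^ m * ρ := by
    obtain ⟨m, hm⟩ := pow_unbounded_of_one_lt (t / ρ) one_lt_two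
    exact ⟨m, (div_lt_iff₀ hρ).mp hm⟩
  refine ⟨Nat.find hex, Nat.find_spec hex, ?_⟩
  rcases h : Nat.find hex with - | m
  · linarith [le_max_left ρ t]
  · have hm : 2 ^ m * ρ ≤ t := not_lt.mp (Nat.find_min hex (h ▸ m.lt_succ_self))
    rw [pow_succ]
    linarith [le_max_right ρ t]

theorem ofReal_mul_inv_toReal_mul_le (a : ℝ) (V : ℝ≥0∞) :
    ENNReal.ofReal (a * V.toReal⁻¹) * V ≤ ENNReal.ofReal a := by
  rw [ENNReal.ofReal_mul' (inv_nonneg.mpr ENNReal.toReal_nonneg), mul_assoc]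
  refine mul_le_of_le_one_right' ?_
  rcases eq_or_ne V 0 with rfl | h0
  · simp
  rcases eq_or_ne V ⊤ with rfl | htop
  · simp
  rw [ENNReal.ofReal_inv_of_pos (ENNReal.toReal_pos h0 htop), ENNReal.ofReal_toReal htop,
    ENNReal.inv_mul_cancel h0 htop]

section HomogeneousType

variable {X : Type*} [MeasurableSpace X] {d : X → X → ℝ} {μ : Measure X}

structure IsHomogeneousType (d : X → X → ℝ) (μ : Measure X) (A₀ Cμ : ℝ) : Prop where
  one_le_A₀ : 1 ≤ A₀
  nonneg : ∀ x y, 0 ≤ d x y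
  symm : ∀ x y, d x y = d y x
  quasi_triangle : ∀ x y z, d x y ≤ A₀ * (d x z + d z y)
  measure_qball_pos : ∀ x r, 0 < r → 0 < μ (qball d x r)
  measure_qball_lt_top : ∀ x r, 0 < r → μ (qball d x r) < ⊤
  one_le_Cμ : 1 ≤ Cμ
  doubling : ∀ x r, 0 < r → μ (qball d x (2 * r)) ≤ ENNReal.ofReal Cμ * μ (qball d x r)

variable (d μ) in
def ballVol (x : X) (r : ℝ) : ℝ := (μ (qball d x r)).toReal

variable (d μ) in
noncomputable def decayBound (γ : ℝ) (x : X) (r : ℝ) (z : X) : ℝ :=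
  (ballVol d μ x r + ballVol d μ x (d x z))⁻¹ * (r / (r + d x z)) ^ γ

/-- Since `d` is not assumed measurable, the profiles integrated below need not be measurable, and
the lower integral `∫⁻` is not subadditive on non-measurable functions; bounds are therefore
carried through measurable majorants. -/
def HasMeasurableMajorant (μ : Measure X) (G : X → ℝ) (C : ℝ) : Prop :=
  ∃ M : X → ℝ≥0∞, Measurable M ∧ (∀ z, ENNReal.ofReal (G z) ≤ M z) ∧
    ∫⁻ z, M z ∂μ ≤ ENNReal.ofReal C

namespace HasMeasurableMajorant

variable {G G' : X → ℝ} {C C' : ℝ}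

theorem mono (h : HasMeasurableMajorant μ G C) (hG : ∀ z, G' z ≤ G z) :
    HasMeasurableMajorant μ G' C :=
  let ⟨M, hM, hGM, hMC⟩ := h
  ⟨M, hM, fun z => (ENNReal.ofReal_le_ofReal (hG z)).trans (hGM z), hMC⟩

theorem add (h : HasMeasurableMajorant μ G C) (h' : HasMeasurableMajorant μ G' C')
    (hC : 0 ≤ C) (hC' : 0 ≤ C') : HasMeasurableMajorant μ (fun z => G z + G' z) (C + C') := by
  obtain ⟨M, hM, hGM, hMC⟩ := h
  obtain ⟨M', hM', hGM', hMC'⟩ := h'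
  refine ⟨fun z => M z + M' z, hM.add hM',
    fun z => ENNReal.ofReal_add_le.trans (add_le_add (hGM z) (hGM' z)), ?_⟩
  rw [lintegral_add_left' hM.aemeasurable, ENNReal.ofReal_add hC hC']
  exact add_le_add hMC hMC'

theorem const_mul (h : HasMeasurableMajorant μ G C) {c : ℝ} (hc : 0 ≤ c) :
    HasMeasurableMajorant μ (fun z => c * G z) (c * C) := by
  obtain ⟨M, hM, hGM, hMC⟩ := h
  refine ⟨fun z => ENNReal.ofReal c * M z, hM.const_mul _, fun z => ?_, ?_⟩
  · rw [ENNReal.ofReal_mul hc]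
    exact mul_le_mul_right (hGM z) _
  · rw [lintegral_const_mul _ hM, ENNReal.ofReal_mul hc]
    exact mul_le_mul_right hMC _

theorem abs_integral_le {F : X → ℝ} (h : HasMeasurableMajorant μ (fun z => |F z|) C)
    (hC : 0 ≤ C) : |∫ z, F z ∂μ| ≤ C := by
  obtain ⟨M, -, hFM, hMC⟩ := h
  calc |∫ z, F z ∂μ| ≤ (∫⁻ z, ENNReal.ofReal ‖F z‖ ∂μ).toReal :=
        norm_integral_le_lintegral_norm F
    _ ≤ (ENNReal.ofReal C).toReal :=
        ENNReal.toReal_mono ENNReal.ofReal_ne_top ((lintegral_mono hFM).trans hMC)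
    _ = C := ENNReal.toReal_ofReal hC

theorem abs_integral_mul_le {f φ : X → ℝ} (c : ℝ)
    (h : HasMeasurableMajorant μ (fun z => |(f z - c) * φ z|) C) (hC : 0 ≤ C)
    (hφ : Integrable φ μ) (hφ₀ : ∫ z, φ z ∂μ = 0) : |∫ z, f z * φ z ∂μ| ≤ C := by
  by_cases hfφ : Integrable (fun z => f z * φ z) μ
  · have hshift : ∫ z, f z * φ z ∂μ = ∫ z, (f z - c) * φ z ∂μ := by
      simp only [sub_mul]
      rw [integral_sub hfφ (hφ.const_mul c), integral_const_mul, hφ₀, mul_zero, sub_zero]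
    rw [hshift]
    exact h.abs_integral_le hC
  · rw [integral_undef hfφ, abs_zero]
    exact hC

end HasMeasurableMajorant

/-- Every `z` meets the conditions on `m` in `hG` for some `m` (`exists_two_pow_mul_scale`), and
they confine `z` to `B(x₀, 2^m ρ)`. -/
theorem hasMeasurableMajorant_of_dyadic_bound (x₀ : X) {ρ c q : ℝ} (hρ : 0 < ρ) (hc : 0 ≤ c)
    (hq₀ : 0 ≤ q) (hq₁ : q < 1) {G : X → ℝ}
    (hG : ∀ (m : ℕ) (z : X), d x₀ z < 2 ^ m * ρ → 2 ^ m * ρ ≤ 2 * max ρ (d x₀ z) →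
      G z ≤ c * q ^ m * (ballVol d μ x₀ (2 ^ m * ρ))⁻¹) :
    HasMeasurableMajorant μ G (c / (1 - q)) := by
  set S : ℕ → Set X := fun m => {z | d x₀ z < 2 ^ m * ρ ∧ 2 ^ m * ρ ≤ 2 * max ρ (d x₀ z)}
  set b : ℕ → ℝ≥0∞ := fun m => ENNReal.ofReal (c * q ^ m * (ballVol d μ x₀ (2 ^ m * ρ))⁻¹)
  have hS : ∀ m, MeasurableSet (toMeasurable μ (S m)) := fun m => measurableSet_toMeasurable μ _
  refine ⟨fun z => ∑' m, (toMeasurable μ (S m)).indicator (fun _ => b m) z,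
    Measurable.tsum fun m => measurable_const.indicator (hS m), fun z => ?_, ?_⟩
  · obtain ⟨m, hzm⟩ := exists_two_pow_mul_scale hρ (d x₀ z)
    refine le_trans ?_ (ENNReal.le_tsum m)
    rw [Set.indicator_of_mem (subset_toMeasurable μ _ hzm)]
    exact ENNReal.ofReal_le_ofReal (hG m z hzm.1 hzm.2)
  · have hsum : HasSum (fun m : ℕ => c * q ^ m) (c / (1 - q)) := by
      rw [div_eq_mul_inv]
      exact (hasSum_geometric_of_lt_one hq₀ hq₁).mul_left c
    rw [lintegral_tsum fun m => (measurable_const.indicator (hS m)).aemeasurable,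
      ← hsum.tsum_eq, ENNReal.ofReal_tsum_of_nonneg (fun m => by positivity) hsum.summable]
    refine ENNReal.tsum_le_tsum fun m => ?_
    rw [lintegral_indicator_const (hS m), measure_toMeasurable]
    calc b m * μ (S m) ≤ b m * μ (qball d x₀ (2 ^ m * ρ)) :=
          mul_le_mul_right (measure_mono fun z hz => hz.1) _
      _ ≤ ENNReal.ofReal (c * q ^ m) := ofReal_mul_inv_toReal_mul_le _ _

end HomogeneousType

namespace IsHomogeneousType

variable {X : Type*} [MeasurableSpace X] {d : X → X → ℝ} {μ : Measure X} {A₀ Cμ : ℝ}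
  (hX : IsHomogeneousType d μ A₀ Cμ)
include hX

theorem A₀_pos : 0 < A₀ := one_pos.trans_le hX.one_le_A₀

theorem ballVol_pos (x : X) {r : ℝ} (hr : 0 < r) : 0 < ballVol d μ x r :=
  ENNReal.toReal_pos (hX.measure_qball_pos x r hr).ne' (hX.measure_qball_lt_top x r hr).ne

theorem ballVol_le_of_subset {x x' : X} {r R : ℝ} (hR : 0 < R)
    (h : qball d x r ⊆ qball d x' R) : ballVol d μ x r ≤ ballVol d μ x' R :=
  ENNReal.toReal_mono (hX.measure_qball_lt_top x' R hR).ne (measure_mono h)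

theorem ballVol_mono (x : X) {r R : ℝ} (hR : 0 < R) (h : r ≤ R) :
    ballVol d μ x r ≤ ballVol d μ x R :=
  hX.ballVol_le_of_subset hR fun _ hz => lt_of_lt_of_le hz h

theorem measure_qball_two_pow_mul_le (x : X) {ρ : ℝ} (hρ : 0 < ρ) (m : ℕ) :
    μ (qball d x (2 ^ m * ρ)) ≤ ENNReal.ofReal Cμ ^ m * μ (qball d x ρ) := by
  induction m with
  | zero => simp
  | succ m ih =>
    calc μ (qball d x (2 ^ (m + 1) * ρ)) = μ (qball d x (2 * (2 ^ m * ρ))) := by ring_nf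
      _ ≤ ENNReal.ofReal Cμ * μ (qball d x (2 ^ m * ρ)) := hX.doubling x _ (by positivity)
      _ ≤ ENNReal.ofReal Cμ * (ENNReal.ofReal Cμ ^ m * μ (qball d x ρ)) := by gcongr
      _ = ENNReal.ofReal Cμ ^ (m + 1) * μ (qball d x ρ) := by ring

theorem ballVol_le_pow_mul (x : X) {r ρ : ℝ} (m : ℕ) (hρ : 0 < ρ) (h : r ≤ 2 ^ m * ρ) :
    ballVol d μ x r ≤ Cμ ^ m * ballVol d μ x ρ := by
  have hCμ : 0 ≤ Cμ := zero_le_one.trans hX.one_le_Cμ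
  calc ballVol d μ x r ≤ ballVol d μ x (2 ^ m * ρ) := hX.ballVol_mono x (by positivity) h
    _ ≤ (ENNReal.ofReal Cμ ^ m * μ (qball d x ρ)).toReal :=
        ENNReal.toReal_mono
          (ENNReal.mul_ne_top (pow_ne_top ENNReal.ofReal_ne_top)
            (hX.measure_qball_lt_top x ρ hρ).ne)
          (hX.measure_qball_two_pow_mul_le x hρ m)
    _ = Cμ ^ m * ballVol d μ x ρ := by
        rw [ENNReal.toReal_mul, ENNReal.toReal_pow, ENNReal.toReal_ofReal hCμ, ballVol]

theorem inv_ballVol_add_le {x : X} {r D W K : ℝ} (hr : 0 < r) (hW : 0 < W)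
    (h : W ≤ K * ballVol d μ x (max r D)) :
    (ballVol d μ x r + ballVol d μ x D)⁻¹ ≤ K * W⁻¹ := by
  have hmax : 0 < ballVol d μ x (max r D) := hX.ballVol_pos x (lt_max_of_lt_left hr)
  have hsum : ballVol d μ x (max r D) ≤ ballVol d μ x r + ballVol d μ x D := by
    have h0 : ∀ R, 0 ≤ ballVol d μ x R := fun _ => ENNReal.toReal_nonneg
    rcases max_choice r D with h' | h' <;> rw [h'] <;> linarith [h0 r, h0 D]
  calc (ballVol d μ x r + ballVol d μ x D)⁻¹ ≤ (ballVol d μ x (max r D))⁻¹ :=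
        inv_anti₀ hmax hsum
    _ ≤ K * W⁻¹ := by
        rw [← div_eq_mul_inv, le_div_iff₀ hW, inv_mul_le_iff₀ hmax, mul_comm]
        exact h

theorem decayBound_nonneg (γ : ℝ) (x : X) {r : ℝ} (hr : 0 ≤ r) (z : X) :
    0 ≤ decayBound d μ γ x r z := by
  have := hX.nonneg x z
  unfold decayBound ballVol
  positivity

theorem hasMeasurableMajorant_rpow_mul_decayBound {a b : ℝ} (ha : 0 ≤ a) (hab : a < b) (x₀ : X)
    {ρ : ℝ} (hρ : 0 < ρ) :
    HasMeasurableMajorant μ (fun z => (d x₀ z / ρ) ^ a * decayBound d μ b x₀ ρ z)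
      (Cμ * 2 ^ b / (1 - 2 ^ (a - b))) := by
  have hCμ : 0 ≤ Cμ := zero_le_one.trans hX.one_le_Cμ
  refine hasMeasurableMajorant_of_dyadic_bound (d := d) x₀ hρ (by positivity) (by positivity)
    (Real.rpow_lt_one_of_one_lt_of_neg one_lt_two (by linarith)) fun m z hz hm => ?_
  have hD := hX.nonneg x₀ z
  have hratio : (d x₀ z / ρ) ^ a ≤ ((2 : ℝ) ^ a) ^ m := by
    rw [← Real.rpow_natCast, ← Real.rpow_mul zero_le_two, mul_comm, Real.rpow_mul zero_le_two,
      Real.rpow_natCast]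
    exact Real.rpow_le_rpow (by positivity) ((div_le_iff₀ hρ).mpr hz.le) ha
  have hvol : (ballVol d μ x₀ ρ + ballVol d μ x₀ (d x₀ z))⁻¹ ≤
      Cμ * (ballVol d μ x₀ (2 ^ m * ρ))⁻¹ :=
    hX.inv_ballVol_add_le hρ (hX.ballVol_pos x₀ (by positivity))
      (by simpa using hX.ballVol_le_pow_mul x₀ 1 (lt_max_of_lt_left hρ) (by simpa using hm))
  have hdecay := rpow_div_add_le_of_two_pow_mul_le hρ hD (ha.trans hab.le) hm
  calc (d x₀ z / ρ) ^ a * decayBound d μ b x₀ ρ z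
      ≤ ((2 : ℝ) ^ a) ^ m * ((Cμ * (ballVol d μ x₀ (2 ^ m * ρ))⁻¹) *
          (2 ^ b * ((2 : ℝ) ^ (-b)) ^ m)) := by
        have hCμV : 0 ≤ Cμ * (ballVol d μ x₀ (2 ^ m * ρ))⁻¹ :=
          mul_nonneg hCμ (inv_nonneg.mpr ENNReal.toReal_nonneg)
        exact mul_le_mul hratio (mul_le_mul hvol hdecay (by positivity) hCμV)
          (hX.decayBound_nonneg b x₀ hρ.le z) (by positivity)
    _ = Cμ * 2 ^ b * ((2 : ℝ) ^ a * 2 ^ (-b)) ^ m * (ballVol d μ x₀ (2 ^ m * ρ))⁻¹ := by ring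
    _ = Cμ * 2 ^ b * ((2 : ℝ) ^ (a - b)) ^ m * (ballVol d μ x₀ (2 ^ m * ρ))⁻¹ := by
        rw [← Real.rpow_add two_pos, ← sub_eq_add_neg]

theorem qball_subset_qball_two_pow_mul_max (y z : X) {r R : ℝ} {M : ℕ} (hM : 3 * A₀ ≤ 2 ^ M)
    (hR : R ≤ 2 * max r (d z y)) : qball d y R ⊆ qball d z (2 ^ M * max r (d z y)) := by
  intro w hw
  have hyw : d y w < 2 * max r (d z y) := lt_of_lt_of_le hw hR
  have hzy : d z y ≤ max r (d z y) := le_max_right _ _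
  have hmax : 0 ≤ max r (d z y) := (hX.nonneg z y).trans hzy
  calc d z w ≤ A₀ * (d z y + d y w) := hX.quasi_triangle z w y
    _ < A₀ * (3 * max r (d z y)) := mul_lt_mul_of_pos_left (by linarith) hX.A₀_pos
    _ ≤ 2 ^ M * max r (d z y) := by nlinarith

theorem hasMeasurableMajorant_decayBound_center {γ : ℝ} (hγ : 0 < γ) {M : ℕ}
    (hM : 3 * A₀ ≤ 2 ^ M) (y : X) {r : ℝ} (hr : 0 < r) :
    HasMeasurableMajorant μ (fun z => decayBound d μ γ z r y)
      (Cμ ^ M * 2 ^ γ / (1 - 2 ^ (-γ))) := by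
  have hCμ : 0 ≤ Cμ := zero_le_one.trans hX.one_le_Cμ
  refine hasMeasurableMajorant_of_dyadic_bound (d := d) y hr (by positivity) (by positivity)
    (Real.rpow_lt_one_of_one_lt_of_neg one_lt_two (by linarith)) fun m z _ hm => ?_
  rw [hX.symm y z] at hm
  have hvol : (ballVol d μ z r + ballVol d μ z (d z y))⁻¹ ≤
      Cμ ^ M * (ballVol d μ y (2 ^ m * r))⁻¹ := by
    have hmax : 0 < max r (d z y) := lt_max_of_lt_left hr
    refine hX.inv_ballVol_add_le hr (hX.ballVol_pos y (by positivity)) ?_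
    exact (hX.ballVol_le_of_subset (by positivity)
      (hX.qball_subset_qball_two_pow_mul_max y z hM hm)).trans
        (hX.ballVol_le_pow_mul z M hmax le_rfl)
  have hdecay := rpow_div_add_le_of_two_pow_mul_le hr (hX.nonneg z y) hγ.le hm
  calc decayBound d μ γ z r y
      ≤ (Cμ ^ M * (ballVol d μ y (2 ^ m * r))⁻¹) * (2 ^ γ * ((2 : ℝ) ^ (-γ)) ^ m) :=
        mul_le_mul hvol hdecay (by have := hX.nonneg z y; positivity)
          (mul_nonneg (by positivity) (inv_nonneg.mpr ENNReal.toReal_nonneg))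
    _ = Cμ ^ M * 2 ^ γ * ((2 : ℝ) ^ (-γ)) ^ m * (ballVol d μ y (2 ^ m * r))⁻¹ := by ring

theorem decayBound_le_mul_decayBound_of_far {x y z : X} {r s γ η : ℝ} {M : ℕ}
    (hM : 2 * A₀ ≤ 2 ^ M) (hs : 0 < s) (hsr : s ≤ r) (hη : 0 ≤ η) (hηγ : η ≤ γ)
    (hfar : (2 * A₀)⁻¹ * (r + d x y) < d x z) :
    decayBound d μ γ x s z ≤
      2 * Cμ ^ M * (2 * A₀) ^ γ * (s / r) ^ η * decayBound d μ γ x r y := by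
  have hA : 0 < 2 * A₀ := by linarith [hX.A₀_pos]
  have hr : 0 < r := hs.trans_le hsr
  have hxy := hX.nonneg x y
  have hfar' : r + d x y < 2 * A₀ * d x z := (inv_mul_lt_iff₀ hA).mp hfar
  have hxz : 0 < d x z := by nlinarith
  have hmax : 0 < max s (d x z) := lt_max_of_lt_right hxz
  have hto : ∀ R, R ≤ r + d x y → R ≤ 2 ^ M * max s (d x z) := fun R hR => by
    nlinarith [le_max_right s (d x z)]
  have hvol : (ballVol d μ x s + ballVol d μ x (d x z))⁻¹ ≤
      2 * Cμ ^ M * (ballVol d μ x r + ballVol d μ x (d x y))⁻¹ := by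
    refine hX.inv_ballVol_add_le hs (add_pos_of_pos_of_nonneg (hX.ballVol_pos x hr)
      ENNReal.toReal_nonneg) ?_
    have h₁ := hX.ballVol_le_pow_mul x M hmax (hto r (by linarith))
    have h₂ := hX.ballVol_le_pow_mul x M hmax (hto (d x y) (by linarith))
    linarith
  have hdecay : (s / (s + d x z)) ^ γ ≤ (2 * A₀) ^ γ * (s / r) ^ η * (r / (r + d x y)) ^ γ := by
    have hsr₁ : s / r ≤ 1 := (div_le_one hr).mpr hsr
    calc (s / (s + d x z)) ^ γ ≤ (2 * A₀ * (s / r) * (r / (r + d x y))) ^ γ :=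
          Real.rpow_le_rpow (by positivity) (div_add_le_of_inv_mul_lt hA hs hr hxy hfar)
            (hη.trans hηγ)
      _ = (2 * A₀) ^ γ * (s / r) ^ γ * (r / (r + d x y)) ^ γ := by
          rw [Real.mul_rpow (by positivity) (by positivity),
            Real.mul_rpow (by positivity) (by positivity)]
      _ ≤ (2 * A₀) ^ γ * (s / r) ^ η * (r / (r + d x y)) ^ γ := by
          gcongr (2 * A₀) ^ γ * ?_ * _
          exact Real.rpow_le_rpow_of_exponent_ge' (by positivity) hsr₁ hη hηγ
  calc decayBound d μ γ x s z
      ≤ (2 * Cμ ^ M * (ballVol d μ x r + ballVol d μ x (d x y))⁻¹) *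
          ((2 * A₀) ^ γ * (s / r) ^ η * (r / (r + d x y)) ^ γ) :=
        mul_le_mul hvol hdecay (by positivity)
          (mul_nonneg (by have := hX.one_le_Cμ; positivity)
            (inv_nonneg.mpr (add_nonneg ENNReal.toReal_nonneg ENNReal.toReal_nonneg)))
    _ = 2 * Cμ ^ M * (2 * A₀) ^ γ * (s / r) ^ η * decayBound d μ γ x r y := by
        unfold decayBound
        ring

theorem decayBound_le_mul_decayBound_sub_of_far {x y z : X} {r s γ η : ℝ} (hs : 0 < s)
    (hr : 0 < r) (hη : 0 ≤ η) (hfar : (2 * A₀)⁻¹ * (r + d x y) < d x z) :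
    decayBound d μ γ x s z ≤ (2 * A₀) ^ η * (s / r) ^ η * decayBound d μ (γ - η) x s z := by
  have hA : 0 < 2 * A₀ := by linarith [hX.A₀_pos]
  have hxy := hX.nonneg x y
  have hxz := hX.nonneg x z
  have hbase : s / (s + d x z) ≤ 2 * A₀ * (s / r) :=
    calc s / (s + d x z) ≤ 2 * A₀ * (s / r) * (r / (r + d x y)) :=
          div_add_le_of_inv_mul_lt hA hs hr hxy hfar
      _ ≤ 2 * A₀ * (s / r) :=
          mul_le_of_le_one_right (by positivity) ((div_le_one (by positivity)).mpr (by linarith))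
  have hsplit : (s / (s + d x z)) ^ γ = (s / (s + d x z)) ^ η * (s / (s + d x z)) ^ (γ - η) := by
    rw [← Real.rpow_add (by positivity), add_sub_cancel]
  calc decayBound d μ γ x s z
      = (s / (s + d x z)) ^ η * decayBound d μ (γ - η) x s z := by
        unfold decayBound
        rw [hsplit]
        ring
    _ ≤ (2 * A₀ * (s / r)) ^ η * decayBound d μ (γ - η) x s z :=
        mul_le_mul_of_nonneg_right (Real.rpow_le_rpow (by positivity) hbase hη)
          (hX.decayBound_nonneg _ x hs.le z)
    _ = (2 * A₀) ^ η * (s / r) ^ η * decayBound d μ (γ - η) x s z := by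
        rw [Real.mul_rpow hA.le (by positivity)]

/-- The three terms cover the region where `f` is Hölder continuous around `x`, and the two halves
of `|f z - f x| ≤ |f z| + |f x|` on its complement. -/
theorem abs_sub_mul_abs_le {f φ : X → ℝ} {x y : X} {r s β γ η CK : ℝ} {M : ℕ}
    (hM : 2 * A₀ ≤ 2 ^ M) (hs : 0 < s) (hsr : s ≤ r) (hη : 0 ≤ η) (hηβ : η ≤ β) (hηγ : η ≤ γ)
    (hCK : 0 ≤ CK) (hf_size : ∀ z, |f z| ≤ CK * decayBound d μ γ z r y)
    (hf_reg : ∀ z, d x z ≤ (2 * A₀)⁻¹ * (r + d x y) →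
      |f x - f z| ≤ CK * (d x z / (r + d x y)) ^ β * decayBound d μ γ x r y)
    (hφ : ∀ z, |φ z| ≤ decayBound d μ γ x s z) (z : X) :
    |f z - f x| * |φ z| ≤ CK * (s / r) ^ η * decayBound d μ γ x r y *
      ((d x z / s) ^ η * decayBound d μ γ x s z
        + 2 * Cμ ^ M * (2 * A₀) ^ γ * decayBound d μ γ z r y
        + (2 * A₀) ^ η * decayBound d μ (γ - η) x s z) := by
  have hr : 0 < r := hs.trans_le hsr
  have hxz := hX.nonneg x z
  have hW := hX.decayBound_nonneg γ x hr.le y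
  have hG₁ : 0 ≤ (d x z / s) ^ η * decayBound d μ γ x s z :=
    mul_nonneg (by positivity) (hX.decayBound_nonneg γ x hs.le z)
  have hG₂ : 0 ≤ 2 * Cμ ^ M * (2 * A₀) ^ γ * decayBound d μ γ z r y := by
    have := hX.one_le_Cμ
    have := hX.A₀_pos
    have := hX.decayBound_nonneg γ z hr.le y
    positivity
  have hG₃ : 0 ≤ (2 * A₀) ^ η * decayBound d μ (γ - η) x s z := by
    have := hX.A₀_pos
    have := hX.decayBound_nonneg (γ - η) x hs.le z
    positivity
  by_cases hnear : d x z ≤ (2 * A₀)⁻¹ * (r + d x y)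
  · have hxy := hX.nonneg x y
    have hA : (2 * A₀)⁻¹ ≤ 1 := inv_le_one_of_one_le₀ (by linarith [hX.one_le_A₀])
    have hratio := rpow_div_le_rpow_mul_rpow hxz hxy hs hr
      (hnear.trans (mul_le_of_le_one_left (by linarith) hA)) hη hηβ
    calc |f z - f x| * |φ z|
        ≤ (CK * ((d x z / s) ^ η * (s / r) ^ η) * decayBound d μ γ x r y) *
            decayBound d μ γ x s z := by
          rw [abs_sub_comm]
          refine mul_le_mul ((hf_reg z hnear).trans ?_) (hφ z) (abs_nonneg _) (by positivity)
          exact mul_le_mul_of_nonneg_right (mul_le_mul_of_nonneg_left hratio hCK) hW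
      _ = CK * (s / r) ^ η * decayBound d μ γ x r y *
            ((d x z / s) ^ η * decayBound d μ γ x s z) := by ring
      _ ≤ _ := by gcongr; linarith
  · replace hnear := not_le.mp hnear
    have hfar₁ := hX.decayBound_le_mul_decayBound_of_far hM hs hsr hη hηγ hnear
    have hfar₂ := hX.decayBound_le_mul_decayBound_sub_of_far (γ := γ) hs hr hη hnear
    calc |f z - f x| * |φ z| ≤ |f z| * |φ z| + |f x| * |φ z| := by
          rw [← add_mul]
          exact mul_le_mul_of_nonneg_right (abs_sub _ _) (abs_nonneg _)
      _ ≤ CK * decayBound d μ γ z r y *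
            (2 * Cμ ^ M * (2 * A₀) ^ γ * (s / r) ^ η * decayBound d μ γ x r y)
          + CK * decayBound d μ γ x r y *
            ((2 * A₀) ^ η * (s / r) ^ η * decayBound d μ (γ - η) x s z) := by
          have hfz : 0 ≤ CK * decayBound d μ γ z r y :=
            mul_nonneg hCK (hX.decayBound_nonneg γ z hr.le y)
          exact add_le_add
            (mul_le_mul (hf_size z) ((hφ z).trans hfar₁) (abs_nonneg _) hfz)
            (mul_le_mul (hf_size x) ((hφ z).trans hfar₂) (abs_nonneg _) (mul_nonneg hCK hW))
      _ = CK * (s / r) ^ η * decayBound d μ γ x r y *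
            (2 * Cμ ^ M * (2 * A₀) ^ γ * decayBound d μ γ z r y
              + (2 * A₀) ^ η * decayBound d μ (γ - η) x s z) := by ring
      _ ≤ _ := by gcongr; linarith

theorem abs_integral_mul_le_decayBound {β γ η : ℝ} (hη : 0 < η) (hηβ : η < β) (hηγ : η < γ) :
    ∃ C, 0 < C ∧ ∀ (x y : X) (r s CK : ℝ) (f φ : X → ℝ), 0 < s → s ≤ r → 0 ≤ CK →
      (∀ z, |f z| ≤ CK * decayBound d μ γ z r y) →
      (∀ z, d x z ≤ (2 * A₀)⁻¹ * (r + d x y) →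
        |f x - f z| ≤ CK * (d x z / (r + d x y)) ^ β * decayBound d μ γ x r y) →
      Integrable φ μ → ∫ z, φ z ∂μ = 0 → (∀ z, |φ z| ≤ decayBound d μ γ x s z) →
      |∫ z, f z * φ z ∂μ| ≤ C * CK * (s / r) ^ η * decayBound d μ γ x r y := by
  obtain ⟨M, hM⟩ : ∃ M : ℕ, 3 * A₀ ≤ 2 ^ M :=
    (pow_unbounded_of_one_lt (3 * A₀) one_lt_two).imp fun _ h => h.le
  have hM₂ : 2 * A₀ ≤ 2 ^ M := by linarith [hX.A₀_pos]
  have hγ : 0 < γ := hη.trans hηγ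
  have hgeom : ∀ t : ℝ, t < 0 → 0 < 1 - (2 : ℝ) ^ t := fun t ht =>
    sub_pos.mpr (Real.rpow_lt_one_of_one_lt_of_neg one_lt_two ht)
  have h₁ := hgeom (η - γ) (by linarith)
  have h₂ := hgeom (-γ) (by linarith)
  have h₃ := hgeom (0 - (γ - η)) (by linarith)
  have hCμ := hX.one_le_Cμ
  have hA₀ := hX.A₀_pos
  set C₁ := Cμ * 2 ^ γ / (1 - 2 ^ (η - γ))
  set C₂ := Cμ ^ M * 2 ^ γ / (1 - 2 ^ (-γ))
  set C₃ := Cμ * 2 ^ (γ - η) / (1 - 2 ^ (0 - (γ - η)))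
  set CF := 2 * Cμ ^ M * (2 * A₀) ^ γ
  refine ⟨C₁ + CF * C₂ + (2 * A₀) ^ η * C₃, by positivity, ?_⟩
  intro x y r s CK f φ hs hsr hCK hf_size hf_reg hφ hφ₀ hφ_size
  have hr : 0 < r := hs.trans_le hsr
  have hmaj₁ := hX.hasMeasurableMajorant_rpow_mul_decayBound hη.le hηγ x hs
  have hmaj₂ := (hX.hasMeasurableMajorant_decayBound_center hγ hM y hr).const_mul
    (c := CF) (by positivity)
  have hmaj₃ := (hX.hasMeasurableMajorant_rpow_mul_decayBound le_rfl (sub_pos.mpr hηγ) x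
    hs).const_mul (c := (2 * A₀) ^ η) (by positivity)
  simp only [Real.rpow_zero, one_mul] at hmaj₃
  have hmaj := (((hmaj₁.add hmaj₂ (by positivity) (by positivity)).add hmaj₃ (by positivity)
    (by positivity)).const_mul (c := CK * (s / r) ^ η * decayBound d μ γ x r y)
    (mul_nonneg (by positivity) (hX.decayBound_nonneg γ x hr.le y))).mono
    (G' := fun z => |(f z - f x) * φ z|) fun z => by
      rw [abs_mul]
      exact hX.abs_sub_mul_abs_le hM₂ hs hsr hη.le hηβ.le hηγ.le hCK hf_size hf_reg hφ_size z
  calc |∫ z, f z * φ z ∂μ|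
      ≤ CK * (s / r) ^ η * decayBound d μ γ x r y * (C₁ + CF * C₂ + (2 * A₀) ^ η * C₃) :=
        hmaj.abs_integral_mul_le (f x)
          (mul_nonneg (mul_nonneg (by positivity) (hX.decayBound_nonneg γ x hr.le y))
            (by positivity)) hφ hφ₀
    _ = _ := by ring

end IsHomogeneousType

theorem stmt18_general {X : Type*} [MeasurableSpace X] (d : X → X → ℝ) (μ : Measure X)
    (A0 : ℝ) (hA0 : 1 ≤ A0)
    (hd_symm : ∀ x y : X, d x y = d y x)
    (hd_nonneg : ∀ x y : X, 0 ≤ d x y)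
    (hd_tri : ∀ x y z : X, d x y ≤ A0 * (d x z + d z y))
    (hball : ∀ (x : X) (r : ℝ), 0 < r → 0 < μ (qball d x r) ∧ μ (qball d x r) < ⊤)
    (Cμ : ℝ) (hCμ : 1 ≤ Cμ)
    (hdouble : ∀ (x : X) (r : ℝ), 0 < r →
      μ (qball d x (2 * r)) ≤ ENNReal.ofReal Cμ * μ (qball d x r))
    (δ : ℝ) (hδ0 : 0 < δ) (hδ1 : δ < (2 * A0) ^ (-10 : ℤ))
    (β γ : ℝ)
    (N : ℕ) (Q : ℕ → X → X → ℝ) (CQ : ℝ) (hCQ : 0 < CQ)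
    -- size condition of the kernels:
    (hQsize : ∀ (k : ℕ) (x y : X), |Q k x y| ≤
      CQ * ((μ (qball d x (δ ^ k))).toReal + (μ (qball d x (d x y))).toReal)⁻¹
        * (δ ^ k / (δ ^ k + d x y)) ^ γ)
    -- Hölder regularity of order `β` in the first variable:
    (hQreg : ∀ (k : ℕ) (x x' y : X), d x x' ≤ (2 * A0)⁻¹ * (δ ^ k + d x y) →
      |Q k x y - Q k x' y| ≤
        CQ * (d x x' / (δ ^ k + d x y)) ^ β
          * ((μ (qball d x (δ ^ k))).toReal + (μ (qball d x (d x y))).toReal)⁻¹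
          * (δ ^ k / (δ ^ k + d x y)) ^ γ)
    (η' : ℝ) (hη'0 : 0 < η') (hη' : η' < min β γ) :
    ∃ C₁ : ℝ, 0 < C₁ ∧ ∀ (x y : X) (k l : ℕ), N < l → k ≤ l →
      ∀ φ : X → ℝ, Integrable φ μ → (∫ z, φ z ∂μ) = 0 →
        (∀ z : X, |φ z| ≤
          ((μ (qball d x (δ ^ l))).toReal + (μ (qball d x (d x z))).toReal)⁻¹
            * (δ ^ l / (δ ^ l + d x z)) ^ γ) →
        (∀ z z' : X, d z z' ≤ (2 * A0)⁻¹ * (δ ^ l + d x z) →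
          |φ z - φ z'| ≤ (d z z' / (δ ^ l + d x z)) ^ β
            * ((μ (qball d x (δ ^ l))).toReal + (μ (qball d x (d x z))).toReal)⁻¹
            * (δ ^ l / (δ ^ l + d x z)) ^ γ) →
        |∫ z, Q k z y * φ z ∂μ| ≤
          C₁ * δ ^ (((l : ℝ) - (k : ℝ)) * η')
            * ((μ (qball d x (δ ^ k))).toReal + (μ (qball d x (d x y))).toReal)⁻¹
            * (δ ^ k / (δ ^ k + d x y)) ^ γ := by
  have hX : IsHomogeneousType d μ A0 Cμ := ⟨hA0, hd_nonneg, hd_symm, hd_tri,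
    fun x r hr => (hball x r hr).1, fun x r hr => (hball x r hr).2, hCμ, hdouble⟩
  have hδ : δ < 1 := hδ1.trans_le (zpow_le_one_of_nonpos₀ (by linarith) (by norm_num))
  obtain ⟨C, hC, hest⟩ := hX.abs_integral_mul_le_decayBound hη'0
    (hη'.trans_le (min_le_left β γ)) (hη'.trans_le (min_le_right β γ))
  refine ⟨C * CQ, mul_pos hC hCQ, fun x y k l _ hkl φ hφ hφ₀ hφ_size _ => ?_⟩
  rw [Real.rpow_mul hδ0.le, Real.rpow_sub hδ0, Real.rpow_natCast, Real.rpow_natCast]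
  exact (hest x y (δ ^ k) (δ ^ l) CQ (fun z => Q k z y) φ (by positivity)
    (pow_le_pow_of_le_one hδ0.le hδ.le hkl) hCQ.le
    (fun z => (hQsize k z y).trans_eq (mul_assoc _ _ _))
    (fun z hz => (hQreg k x z y hz).trans_eq (mul_assoc _ _ _))
    hφ hφ₀ hφ_size).trans_eq (mul_assoc _ _ _).symm

/-- Let `{Q̃_k}` be kernels with the standard size condition, `β`-Hölder regularity
in the first variable, and `∫ Q̃_k(x,·) dμ = 0` for `k > N`. Fix `η' ∈ (0, β∧γ)`.
Then for `l > N`, `k ≤ l`, and any `φ ∈ G(x,δ^l,β,γ)` with `∫ φ dμ = 0` and norm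
at most `1`,
`|∫ Q̃_k(z,y) φ(z) dμ(z)| ≤ C₁ δ^{(l−k)η'} [V_{δ^k}(x)+V(x,y)]⁻¹ [δ^k/(δ^k+d(x,y))]^γ`. -/
theorem stmt18 {X : Type*} [MeasurableSpace X] (d : X → X → ℝ) (μ : Measure X)
    (A0 : ℝ) (hA0 : 1 ≤ A0)
    (hd_eq : ∀ x y : X, d x y = 0 ↔ x = y)
    (hd_symm : ∀ x y : X, d x y = d y x)
    (hd_nonneg : ∀ x y : X, 0 ≤ d x y)
    (hd_tri : ∀ x y z : X, d x y ≤ A0 * (d x z + d z y))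
    (hball : ∀ (x : X) (r : ℝ), 0 < r → 0 < μ (qball d x r) ∧ μ (qball d x r) < ⊤)
    (Cμ : ℝ) (hCμ : 1 ≤ Cμ)
    (hdouble : ∀ (x : X) (r : ℝ), 0 < r →
      μ (qball d x (2 * r)) ≤ ENNReal.ofReal Cμ * μ (qball d x r))
    (δ : ℝ) (hδ0 : 0 < δ) (hδ1 : δ < (2 * A0) ^ (-10 : ℤ))
    (β γ : ℝ) (hβ : 0 < β) (hγ : 0 < γ)
    (N : ℕ) (Q : ℕ → X → X → ℝ) (CQ : ℝ) (hCQ : 0 < CQ)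
    -- size condition of the kernels:
    (hQsize : ∀ (k : ℕ) (x y : X), |Q k x y| ≤
      CQ * ((μ (qball d x (δ ^ k))).toReal + (μ (qball d x (d x y))).toReal)⁻¹
        * (δ ^ k / (δ ^ k + d x y)) ^ γ)
    -- Hölder regularity of order `β` in the first variable:
    (hQreg : ∀ (k : ℕ) (x x' y : X), d x x' ≤ (2 * A0)⁻¹ * (δ ^ k + d x y) →
      |Q k x y - Q k x' y| ≤
        CQ * (d x x' / (δ ^ k + d x y)) ^ β
          * ((μ (qball d x (δ ^ k))).toReal + (μ (qball d x (d x y))).toReal)⁻¹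
          * (δ ^ k / (δ ^ k + d x y)) ^ γ)
    -- cancellation for `k > N`:
    (hQcancel : ∀ (k : ℕ), N < k → ∀ x : X, ∫ y, Q k x y ∂μ = 0)
    (η' : ℝ) (hη'0 : 0 < η') (hη' : η' < min β γ) :
    ∃ C₁ : ℝ, 0 < C₁ ∧ ∀ (x y : X) (k l : ℕ), N < l → k ≤ l →
      ∀ φ : X → ℝ, Integrable φ μ → (∫ z, φ z ∂μ) = 0 →
        (∀ z : X, |φ z| ≤
          ((μ (qball d x (δ ^ l))).toReal + (μ (qball d x (d x z))).toReal)⁻¹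
            * (δ ^ l / (δ ^ l + d x z)) ^ γ) →
        (∀ z z' : X, d z z' ≤ (2 * A0)⁻¹ * (δ ^ l + d x z) →
          |φ z - φ z'| ≤ (d z z' / (δ ^ l + d x z)) ^ β
            * ((μ (qball d x (δ ^ l))).toReal + (μ (qball d x (d x z))).toReal)⁻¹
            * (δ ^ l / (δ ^ l + d x z)) ^ γ) →
        |∫ z, Q k z y * φ z ∂μ| ≤
          C₁ * δ ^ (((l : ℝ) - (k : ℝ)) * η')
            * ((μ (qball d x (δ ^ k))).toReal + (μ (qball d x (d x y))).toReal)⁻¹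
            * (δ ^ k / (δ ^ k + d x y)) ^ γ :=
  stmt18_general d μ A0 hA0 hd_symm hd_nonneg hd_tri hball Cμ hCμ hdouble δ hδ0 hδ1 β γ N Q CQ hCQ
    hQsize hQreg η' hη'0 hη'
end

section
/- Let (X,d,μ) be a space of homogeneous type with μ(X) = ∞ and p ∈ (ω/(ω+η),1]. If f ∈ H^p_cw(X) ∩ L²(X) (in particular any finite linear combination of (p,∞)-atoms, each with vanishing integral), then ∫_X f(x) dμ(x) = 0. Consequently, any test function f ∈ G(β,γ) with ∫ f dμ ≠ 0 belongs to h^p(X) but not to H^p_cw(X), so H^p_cw(X) ⊊ h^p(X). -/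
open MeasureTheory ENNReal Filter

/-- A Coifman–Weiss `(p,∞)`-atom: supported in a ball `B`, `‖a‖_{L^∞} ≤ μ(B)^{-1/p}`,
and vanishing integral. -/
def IsCWAtomInf {X : Type*} [MeasurableSpace X] (d : X → X → ℝ) (μ : Measure X)
    (p : ℝ) (a : X → ℝ) : Prop :=
  Integrable a μ ∧ ∃ (x₀ : X) (r₀ : ℝ), 0 < r₀ ∧
    Function.support a ⊆ qball d x₀ r₀ ∧
    (∀ x, |a x| ≤ (μ (qball d x₀ r₀)).toReal ^ (-(1 / p))) ∧
    ∫ x, a x ∂μ = 0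

/-- A local `(p,∞)`-atom: supported in a ball `B(x₀,r₀)`,
`‖a‖_{L^∞} ≤ μ(B)^{-1/p}`, and vanishing integral required only when `r₀ ≤ 1`. -/
def IsLocalAtomInf {X : Type*} [MeasurableSpace X] (d : X → X → ℝ) (μ : Measure X)
    (p : ℝ) (a : X → ℝ) : Prop :=
  Integrable a μ ∧ ∃ (x₀ : X) (r₀ : ℝ), 0 < r₀ ∧
    Function.support a ⊆ qball d x₀ r₀ ∧
    (∀ x, |a x| ≤ (μ (qball d x₀ r₀)).toReal ^ (-(1 / p))) ∧
    (r₀ ≤ 1 → ∫ x, a x ∂μ = 0)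

/-- `f ∈ H^p_cw(X)`: `f` has an atomic decomposition `f = Σ_j λ_j a_j` into
Coifman–Weiss `(p,∞)`-atoms with `Σ_j |λ_j|^p < ∞`, converging in `L¹(X)`. -/
def InHcw {X : Type*} [MeasurableSpace X] (d : X → X → ℝ) (μ : Measure X)
    (p : ℝ) (f : X → ℝ) : Prop :=
  ∃ (lam : ℕ → ℝ) (a : ℕ → X → ℝ),
    (∀ j, IsCWAtomInf d μ p (a j)) ∧ (Summable fun j => |lam j| ^ p) ∧
    Tendsto (fun n => ∫ x, |f x - ∑ j ∈ Finset.range n, lam j * a j x| ∂μ)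
      atTop (nhds 0)

/-- `f ∈ h^p(X)`: `f` has an atomic decomposition `f = Σ_j λ_j a_j` into local
`(p,∞)`-atoms with `Σ_j |λ_j|^p < ∞`, converging in `L¹(X)`. -/
def Inhp {X : Type*} [MeasurableSpace X] (d : X → X → ℝ) (μ : Measure X)
    (p : ℝ) (f : X → ℝ) : Prop :=
  ∃ (lam : ℕ → ℝ) (a : ℕ → X → ℝ),
    (∀ j, IsLocalAtomInf d μ p (a j)) ∧ (Summable fun j => |lam j| ^ p) ∧
    Tendsto (fun n => ∫ x, |f x - ∑ j ∈ Finset.range n, lam j * a j x| ∂μ)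
      atTop (nhds 0)

/-!
Each partial sum of a Coifman–Weiss atomic series has integral zero, and the series converges in
`L¹`, so every `f ∈ H^p_cw(X)` has `∫ f = 0`.

A function with the size decay of `G(x₀,1,β,γ)` is cut into the layers
`{c (j+1) < |f| ≤ c j}` with `c j = μ(B(x₀,2^j))⁻¹ 2^{-jγ}`. The size condition puts the `j`-th
layer inside `B(x₀,2^(j+1))`, a ball of radius `> 1`, so after normalisation it is a local atom
with no cancellation required. The coefficients are `c j μ(B(x₀,2^(j+1)))^{1/p}`, and doubling
bounds their `p`-th powers by a geometric sequence of ratio `C_μ^{1-p} 2^{-γp}`, which is `< 1`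
exactly when `γ > ω(1/p - 1)`.
-/

section IntegralLimit

variable {X : Type*} [MeasurableSpace X] {μ : Measure X}

lemma integral_eq_zero_of_tendsto_integral_abs_sub {f : X → ℝ} {F : ℕ → X → ℝ}
    (hf : Integrable f μ) (hF : ∀ n, Integrable (F n) μ) (hF0 : ∀ n, ∫ x, F n x ∂μ = 0)
    (hlim : Tendsto (fun n => ∫ x, |f x - F n x| ∂μ) atTop (nhds 0)) :
    ∫ x, f x ∂μ = 0 := by
  have hle : ∀ n, |∫ x, f x ∂μ| ≤ ∫ x, |f x - F n x| ∂μ := fun n =>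
    calc |∫ x, f x ∂μ| = |∫ x, (f x - F n x) ∂μ| := by
          rw [integral_sub hf (hF n), hF0 n, sub_zero]
      _ ≤ ∫ x, |f x - F n x| ∂μ := abs_integral_le_integral_abs
  exact abs_nonpos_iff.mp (ge_of_tendsto' hlim hle)

lemma InHcw.integral_eq_zero {d : X → X → ℝ} {p : ℝ} {f : X → ℝ} (hf : Integrable f μ)
    (h : InHcw d μ p f) : ∫ x, f x ∂μ = 0 := by
  obtain ⟨lam, a, hatom, -, hlim⟩ := h
  have hint : ∀ j, Integrable (fun x => lam j * a j x) μ := fun j => (hatom j).1.const_mul _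
  refine integral_eq_zero_of_tendsto_integral_abs_sub hf
    (fun n => integrable_finsetSum _ fun j _ => hint j) (fun n => ?_) hlim
  rw [integral_finsetSum _ fun j _ => hint j]
  refine Finset.sum_eq_zero fun j _ => ?_
  obtain ⟨-, -, -, -, -, -, hzero⟩ := hatom j
  rw [integral_const_mul, hzero, mul_zero]

end IntegralLimit

section Truncation

noncomputable def dropSmall (c t : ℝ) : ℝ := if |t| ≤ c then 0 else t

lemma dropSmall_of_abs_le {c t : ℝ} (h : |t| ≤ c) : dropSmall c t = 0 := if_pos h

lemma dropSmall_of_lt_abs {c t : ℝ} (h : c < |t|) : dropSmall c t = t := if_neg h.not_ge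

lemma measurable_dropSmall (c : ℝ) : Measurable (dropSmall c) :=
  Measurable.ite (measurableSet_le measurable_abs measurable_const) measurable_const measurable_id

lemma abs_sub_dropSmall_le (c t : ℝ) : |t - dropSmall c t| ≤ |t| := by
  unfold dropSmall; split_ifs <;> simp

lemma abs_dropSmall_le (c t : ℝ) : |dropSmall c t| ≤ |t| := by
  unfold dropSmall; split_ifs <;> simp

lemma tendsto_dropSmall {c : ℕ → ℝ} (hc : Tendsto c atTop (nhds 0)) (t : ℝ) :
    Tendsto (fun n => dropSmall (c n) t) atTop (nhds t) := by
  rcases eq_or_ne t 0 with rfl | ht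
  · simp [dropSmall]
  · refine tendsto_const_nhds.congr' ?_
    filter_upwards [hc.eventually_lt_const (abs_pos.2 ht)] with n hn
    exact (dropSmall_of_lt_abs hn).symm

variable {c c' t : ℝ}

lemma lt_abs_of_dropSmall_sub_ne_zero (hc : c' ≤ c) (h : dropSmall c' t - dropSmall c t ≠ 0) :
    c' < |t| := by
  by_contra! ht
  exact h (by rw [dropSmall_of_abs_le ht, dropSmall_of_abs_le (ht.trans hc), sub_zero])

lemma abs_dropSmall_sub_le (hc : c' ≤ c) (hc0 : 0 ≤ c) :
    |dropSmall c' t - dropSmall c t| ≤ c := by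
  unfold dropSmall; split_ifs <;> simp <;> linarith

end Truncation

section LayerDecomposition

variable {X : Type*} [MeasurableSpace X] {μ : Measure X} {f : X → ℝ}

lemma MeasureTheory.Integrable.dropSmall_comp (hf : Integrable f μ) (c : ℝ) :
    Integrable (fun x => dropSmall c (f x)) μ :=
  hf.mono ((measurable_dropSmall c).comp_aemeasurable hf.aemeasurable).aestronglyMeasurable
    (ae_of_all _ fun x => by simpa only [Real.norm_eq_abs] using abs_dropSmall_le c (f x))

lemma tendsto_integral_abs_sub_dropSmall (hf : Integrable f μ) {c : ℕ → ℝ}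
    (hc : Tendsto c atTop (nhds 0)) :
    Tendsto (fun n => ∫ x, |f x - dropSmall (c n) (f x)| ∂μ) atTop (nhds 0) := by
  have h := tendsto_integral_of_dominated_convergence (fun x => |f x|)
    (fun n => ((hf.sub (hf.dropSmall_comp (c n))).abs).aestronglyMeasurable) hf.abs
    (fun n => ae_of_all _ fun x => by
      simpa only [Real.norm_eq_abs, abs_abs, Pi.sub_apply] using abs_sub_dropSmall_le (c n) (f x))
    (ae_of_all _ fun x => by
      simpa using ((tendsto_dropSmall hc (f x)).const_sub (f x)).abs)
  simpa using h

theorem inhp_of_layers {d : X → X → ℝ} {p : ℝ} (hp : 0 < p) (hf : Integrable f μ) {x₀ : X}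
    {c r : ℕ → ℝ} (hc_pos : ∀ j, 0 < c j) (hc_anti : Antitone c)
    (hc_lim : Tendsto c atTop (nhds 0)) (hr : ∀ j, 1 < r j)
    (hV : ∀ j, 0 < (μ (qball d x₀ (r j))).toReal) (hf_le : ∀ x, |f x| ≤ c 0)
    (hf_ball : ∀ j x, c (j + 1) < |f x| → x ∈ qball d x₀ (r j))
    (hsum : Summable fun j => c j ^ p * (μ (qball d x₀ (r j))).toReal) :
    Inhp d μ p f := by
  set V : ℕ → ℝ := fun j => (μ (qball d x₀ (r j))).toReal
  set lam : ℕ → ℝ := fun j => c j * V j ^ (1 / p)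
  have hlam_pos : ∀ j, 0 < lam j := fun j => mul_pos (hc_pos j) (Real.rpow_pos_of_pos (hV j) _)
  set layer : ℕ → X → ℝ := fun j x => dropSmall (c (j + 1)) (f x) - dropSmall (c j) (f x)
  have hsum_layer : ∀ n x, ∑ j ∈ Finset.range n, layer j x = dropSmall (c n) (f x) := by
    intro n x
    rw [Finset.sum_range_sub (fun j => dropSmall (c j) (f x)), dropSmall_of_abs_le (hf_le x),
      sub_zero]
  refine ⟨lam, fun j x => (lam j)⁻¹ * layer j x, fun j => ?_, ?_, ?_⟩
  · have hcj : c (j + 1) ≤ c j := hc_anti j.le_succ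
    refine ⟨((hf.dropSmall_comp _).sub (hf.dropSmall_comp _)).const_mul _, x₀, r j,
      one_pos.trans (hr j), fun x hx => ?_, fun x => ?_, fun h => absurd h (hr j).not_ge⟩
    · exact hf_ball j x (lt_abs_of_dropSmall_sub_ne_zero hcj (right_ne_zero_of_mul hx))
    · calc |(lam j)⁻¹ * layer j x| ≤ (lam j)⁻¹ * c j := by
            rw [abs_mul, abs_of_pos (inv_pos.2 (hlam_pos j))]
            exact mul_le_mul_of_nonneg_left (abs_dropSmall_sub_le hcj (hc_pos j).le)
              (inv_pos.2 (hlam_pos j)).le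
        _ = V j ^ (-(1 / p)) := by
            rw [Real.rpow_neg (hV j).le, mul_inv, mul_comm, ← mul_assoc,
              mul_inv_cancel₀ (hc_pos j).ne', one_mul]
  · refine hsum.congr fun j => ?_
    rw [abs_of_pos (hlam_pos j), Real.mul_rpow (hc_pos j).le (Real.rpow_nonneg (hV j).le _),
      ← Real.rpow_mul (hV j).le, one_div_mul_cancel hp.ne', Real.rpow_one]
  · refine (tendsto_integral_abs_sub_dropSmall hf hc_lim).congr fun n => ?_
    simp_rw [← mul_assoc, fun j => mul_inv_cancel₀ (hlam_pos j).ne', one_mul, hsum_layer]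

end LayerDecomposition

section Estimates

open Real

lemma rpow_one_sub_mul_two_rpow_neg_rpow_lt_one {C p γ : ℝ} (hC : 0 < C) (hp : 0 < p)
    (h : logb 2 C * (1 / p - 1) < γ) : C ^ (1 - p) * ((2 : ℝ) ^ (-γ)) ^ p < 1 := by
  have hγp : logb 2 C * (1 - p) < γ * p := by
    have hmul := mul_lt_mul_of_pos_right h hp
    have hlhs : logb 2 C * (1 / p - 1) * p = logb 2 C * (1 - p) := by field_simp
    linarith
  rw [← rpow_logb two_pos (by norm_num) hC, ← rpow_mul zero_le_two, ← rpow_mul zero_le_two,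
    ← rpow_add two_pos]
  exact rpow_lt_one_of_one_lt_of_neg one_lt_two (by linarith)

lemma inv_mul_one_div_one_add_rpow_le {S V t γ : ℝ} {k : ℕ} (hV : 0 < V) (hVS : V ≤ S)
    (hk : (2 : ℝ) ^ k ≤ 1 + t) (hγ : 0 ≤ γ) :
    S⁻¹ * (1 / (1 + t)) ^ γ ≤ V⁻¹ * ((2 : ℝ) ^ (-γ)) ^ k := by
  have h2k : (0 : ℝ) < 2 ^ k := by positivity
  have h1t : 0 ≤ 1 / (1 + t) := one_div_nonneg.2 (h2k.trans_le hk).le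
  have hdecay : (1 / (1 + t)) ^ γ ≤ ((2 : ℝ) ^ (-γ)) ^ k :=
    calc (1 / (1 + t)) ^ γ ≤ (1 / 2 ^ k) ^ γ :=
          rpow_le_rpow h1t (one_div_le_one_div_of_le h2k hk) hγ
      _ = ((2 : ℝ) ^ (-γ)) ^ k := by
        rw [one_div, inv_rpow h2k.le, ← rpow_neg h2k.le, rpow_pow_comm zero_le_two,
          ← rpow_natCast_mul zero_le_two]
  exact mul_le_mul (inv_anti₀ hV hVS) hdecay (rpow_nonneg h1t _) (inv_nonneg.2 hV.le)

lemma antitone_inv_mul_pow {V : ℕ → ℝ} {q : ℝ} (hV : ∀ j, 0 < V j) (hV_mono : Monotone V)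
    (hq : 0 ≤ q) (hq1 : q ≤ 1) : Antitone fun j => (V j)⁻¹ * q ^ j :=
  antitone_nat_of_succ_le fun j => mul_le_mul (inv_anti₀ (hV j) (hV_mono j.le_succ))
    (pow_le_pow_of_le_one hq hq1 j.le_succ) (pow_nonneg hq _) (inv_nonneg.2 (hV j).le)

lemma tendsto_inv_mul_pow_atTop_zero {V : ℕ → ℝ} {q : ℝ} (hV : ∀ j, 0 < V j)
    (hV_mono : Monotone V) (hq : 0 ≤ q) (hq1 : q < 1) :
    Tendsto (fun j => (V j)⁻¹ * q ^ j) atTop (nhds 0) := by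
  refine squeeze_zero (fun j => mul_nonneg (inv_nonneg.2 (hV j).le) (pow_nonneg hq j))
    (fun j => mul_le_mul_of_nonneg_right (inv_anti₀ (hV 0) (hV_mono j.zero_le))
      (pow_nonneg hq j)) ?_
  simpa using (tendsto_pow_atTop_nhds_zero_of_lt_one hq hq1).const_mul (V 0)⁻¹

lemma summable_inv_mul_pow_rpow_mul_of_doubling {V : ℕ → ℝ} {C p q : ℝ} (hV : ∀ j, 0 < V j)
    (hVd : ∀ j, V (j + 1) ≤ C * V j) (hp1 : p ≤ 1) (hq : 0 ≤ q)
    (hρ : C ^ (1 - p) * q ^ p < 1) :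
    Summable fun j => ((V j)⁻¹ * q ^ j) ^ p * V (j + 1) := by
  have hC : 0 < C := (mul_pos_iff_of_pos_right (hV 0)).1 ((hV 1).trans_le (hVd 0))
  have hterm : ∀ j, 0 ≤ (V j)⁻¹ * q ^ j := fun j =>
    mul_nonneg (inv_nonneg.2 (hV j).le) (pow_nonneg hq j)
  have hbound : ∀ j, ((V j)⁻¹ * q ^ j) ^ p * V (j + 1)
      ≤ C * V 0 ^ (1 - p) * (C ^ (1 - p) * q ^ p) ^ j := fun j =>
    calc ((V j)⁻¹ * q ^ j) ^ p * V (j + 1) = (q ^ p) ^ j * (V (j + 1) / V j ^ p) := by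
          rw [mul_rpow (inv_nonneg.2 (hV j).le) (by positivity), inv_rpow (hV j).le,
            ← rpow_pow_comm hq]
          ring
      _ ≤ (q ^ p) ^ j * (C * V j ^ (1 - p)) := by
          rw [rpow_sub (hV j), Real.rpow_one, ← mul_div_assoc C]
          exact mul_le_mul_of_nonneg_left
            (div_le_div_of_nonneg_right (hVd j) (rpow_nonneg (hV j).le _))
            (pow_nonneg (rpow_nonneg hq _) _)
      _ ≤ (q ^ p) ^ j * (C * (C ^ j * V 0) ^ (1 - p)) := by
          gcongr (q ^ p) ^ j * (C * ?_)
          exact rpow_le_rpow (hV j).le (le_geom hC.le j fun k _ => hVd k) (by linarith)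
      _ = C * V 0 ^ (1 - p) * (C ^ (1 - p) * q ^ p) ^ j := by
          rw [mul_rpow (by positivity) (hV 0).le, ← rpow_pow_comm hC.le]
          ring
  have hgeom :=
    summable_geometric_of_lt_one (mul_nonneg (rpow_nonneg hC.le _) (rpow_nonneg hq _)) hρ
  exact Summable.of_nonneg_of_le (fun j => mul_nonneg (rpow_nonneg (hterm j) _) (hV (j + 1)).le)
    hbound (hgeom.mul_left _)

end Estimates

section TestFunction

variable {X : Type*} [MeasurableSpace X] {d : X → X → ℝ} {μ : Measure X} {x₀ : X}

lemma toReal_measure_qball_mono {r s : ℝ} (hs : μ (qball d x₀ s) ≠ ⊤) (h : r ≤ s) :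
    (μ (qball d x₀ r)).toReal ≤ (μ (qball d x₀ s)).toReal :=
  ENNReal.toReal_mono hs (measure_mono fun _ hy => lt_of_lt_of_le hy h)

lemma toReal_measure_qball_two_mul_le {C r : ℝ} (hC : 0 ≤ C) (hr : μ (qball d x₀ r) ≠ ⊤)
    (h : μ (qball d x₀ (2 * r)) ≤ ENNReal.ofReal C * μ (qball d x₀ r)) :
    (μ (qball d x₀ (2 * r))).toReal ≤ C * (μ (qball d x₀ r)).toReal := by
  simpa only [ENNReal.toReal_mul, ENNReal.toReal_ofReal hC] using
    ENNReal.toReal_mono (ENNReal.mul_ne_top ENNReal.ofReal_ne_top hr) h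

theorem inhp_of_abs_le_size_bound {Cμ p γ : ℝ} (hCμ : 1 ≤ Cμ) (hp0 : 0 < p) (hp1 : p ≤ 1)
    (hγ : Real.logb 2 Cμ * (1 / p - 1) < γ) (hd_nonneg : ∀ x, 0 ≤ d x₀ x)
    (hball : ∀ r : ℝ, 0 < r → 0 < μ (qball d x₀ r) ∧ μ (qball d x₀ r) < ⊤)
    (hdouble : ∀ r : ℝ, 0 < r →
      μ (qball d x₀ (2 * r)) ≤ ENNReal.ofReal Cμ * μ (qball d x₀ r))
    {f : X → ℝ} (hf : Integrable f μ)
    (hsize : ∀ x : X, |f x| ≤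
      ((μ (qball d x₀ 1)).toReal + (μ (qball d x₀ (d x₀ x))).toReal)⁻¹
        * (1 / (1 + d x₀ x)) ^ γ) :
    Inhp d μ p f := by
  set V : ℕ → ℝ := fun j => (μ (qball d x₀ (2 ^ j))).toReal with hV_def
  set q : ℝ := (2 : ℝ) ^ (-γ)
  set c : ℕ → ℝ := fun j => (V j)⁻¹ * q ^ j
  have hγ0 : 0 < γ := (mul_nonneg (Real.logb_nonneg one_lt_two hCμ)
    (sub_nonneg.2 (one_le_one_div hp0 hp1))).trans_lt hγ
  have hq : 0 < q := Real.rpow_pos_of_pos two_pos _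
  have hq1 : q < 1 := Real.rpow_lt_one_of_one_lt_of_neg one_lt_two (neg_neg_of_pos hγ0)
  have hfin : ∀ j, μ (qball d x₀ (2 ^ j)) ≠ ⊤ := fun j => (hball _ (by positivity)).2.ne
  have hV_pos : ∀ j, 0 < V j := fun j =>
    ENNReal.toReal_pos (hball _ (by positivity)).1.ne' (hfin j)
  have hV_mono : Monotone V := fun j k hjk =>
    toReal_measure_qball_mono (hfin k) (pow_le_pow_right₀ one_le_two hjk)
  have hV_doubling : ∀ j, V (j + 1) ≤ Cμ * V j := fun j => by
    simpa only [hV_def, pow_succ'] using toReal_measure_qball_two_mul_le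
      (zero_le_one.trans hCμ) (hfin j) (hdouble (2 ^ j) (by positivity))
  have hc_le : ∀ j x, (2 : ℝ) ^ j ≤ 1 + d x₀ x →
      V j ≤ (μ (qball d x₀ 1)).toReal + (μ (qball d x₀ (d x₀ x))).toReal → |f x| ≤ c j :=
    fun j x hj hVj => (hsize x).trans (inv_mul_one_div_one_add_rpow_le (hV_pos j) hVj hj hγ0.le)
  have hc_ball : ∀ j x, c (j + 1) < |f x| → x ∈ qball d x₀ (2 ^ (j + 1)) := fun j x hx => by
    by_contra hout
    have hfar : (2 : ℝ) ^ (j + 1) ≤ d x₀ x := not_lt.1 hout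
    have hfin_far := (hball _ ((by positivity : (0 : ℝ) < _).trans_le hfar)).2.ne
    exact hx.not_ge (hc_le (j + 1) x (by linarith) ((toReal_measure_qball_mono hfin_far
      hfar).trans (le_add_of_nonneg_left ENNReal.toReal_nonneg)))
  exact inhp_of_layers (r := fun j => 2 ^ (j + 1)) hp0 hf
    (fun j => mul_pos (inv_pos.2 (hV_pos j)) (pow_pos hq j))
    (antitone_inv_mul_pow hV_pos hV_mono hq.le hq1.le)
    (tendsto_inv_mul_pow_atTop_zero hV_pos hV_mono hq.le hq1)
    (fun j => one_lt_pow₀ (one_lt_two (α := ℝ)) j.succ_ne_zero) (fun j => hV_pos (j + 1))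
    (fun x => hc_le 0 x (by simp [hd_nonneg x]) (by simp [hV_def])) hc_ball
    (summable_inv_mul_pow_rpow_mul_of_doubling hV_pos hV_doubling hp1 hq.le
      (rpow_one_sub_mul_two_rpow_neg_rpow_lt_one (by linarith) hp0 hγ))

end TestFunction

theorem stmt19_general {X : Type*} [MeasurableSpace X] (d : X → X → ℝ) (μ : Measure X)
    (A0 : ℝ)
    (hd_nonneg : ∀ x y : X, 0 ≤ d x y)
    (hball : ∀ (x : X) (r : ℝ), 0 < r → 0 < μ (qball d x r) ∧ μ (qball d x r) < ⊤)
    (Cμ : ℝ) (hCμ : 1 ≤ Cμ)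
    (hdouble : ∀ (x : X) (r : ℝ), 0 < r →
      μ (qball d x (2 * r)) ≤ ENNReal.ofReal Cμ * μ (qball d x r))
    (η : ℝ) (hη : 0 < η ∧ η < 1)
    (p : ℝ) (hp0 : Real.logb 2 Cμ / (Real.logb 2 Cμ + η) < p) (hp1 : p ≤ 1)
    (β γ : ℝ)
    (hγ : Real.logb 2 Cμ * (1 / p - 1) < γ ∧ γ < η) :
    (∀ f : X → ℝ, MemLp f 2 μ → Integrable f μ → InHcw d μ p f →
      ∫ x, f x ∂μ = 0) ∧
    (∀ (x₀ : X) (f : X → ℝ), Integrable f μ →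
      -- the size condition of `G(x₀,1,β,γ)` with constant `1`:
      (∀ x : X, |f x| ≤
        ((μ (qball d x₀ 1)).toReal + (μ (qball d x₀ (d x₀ x))).toReal)⁻¹
          * (1 / (1 + d x₀ x)) ^ γ) →
      -- the regularity condition of `G(x₀,1,β,γ)` with constant `1`:
      (∀ x y : X, d x y ≤ (2 * A0)⁻¹ * (1 + d x₀ x) →
        |f x - f y| ≤ (d x y / (1 + d x₀ x)) ^ β
          * ((μ (qball d x₀ 1)).toReal + (μ (qball d x₀ (d x₀ x))).toReal)⁻¹
          * (1 / (1 + d x₀ x)) ^ γ) →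
      (∫ x, f x ∂μ) ≠ 0 →
      Inhp d μ p f ∧ ¬ InHcw d μ p f) := by
  have hω : 0 ≤ Real.logb 2 Cμ := Real.logb_nonneg one_lt_two hCμ
  have hp : 0 < p := (div_nonneg hω (add_pos_of_nonneg_of_pos hω hη.1).le).trans_lt hp0
  refine ⟨fun f _ hf hcw => hcw.integral_eq_zero hf, fun x₀ f hf hsize _ hint => ⟨?_, ?_⟩⟩
  · exact inhp_of_abs_le_size_bound hCμ hp hp1 hγ.1 (hd_nonneg x₀) (hball x₀) (hdouble x₀) hf
      hsize
  · exact fun hcw => hint (hcw.integral_eq_zero hf)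

/-- On a space of homogeneous type with `μ(X) = ∞`: any `f ∈ H^p_cw(X) ∩ L²(X)`
has `∫ f dμ = 0`; consequently any test function `f ∈ G(β,γ)` with `∫ f dμ ≠ 0`
belongs to `h^p(X)` but not to `H^p_cw(X)`, so that `H^p_cw(X) ⊊ h^p(X)`. -/
theorem stmt19 {X : Type*} [MeasurableSpace X] (d : X → X → ℝ) (μ : Measure X)
    (A0 : ℝ) (hA0 : 1 ≤ A0)
    (hd_eq : ∀ x y : X, d x y = 0 ↔ x = y)
    (hd_symm : ∀ x y : X, d x y = d y x)
    (hd_nonneg : ∀ x y : X, 0 ≤ d x y)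
    (hd_tri : ∀ x y z : X, d x y ≤ A0 * (d x z + d z y))
    (hball : ∀ (x : X) (r : ℝ), 0 < r → 0 < μ (qball d x r) ∧ μ (qball d x r) < ⊤)
    (hXinf : μ Set.univ = ⊤)
    (Cμ : ℝ) (hCμ : 1 ≤ Cμ)
    (hdouble : ∀ (x : X) (r : ℝ), 0 < r →
      μ (qball d x (2 * r)) ≤ ENNReal.ofReal Cμ * μ (qball d x r))
    (η : ℝ) (hη : 0 < η ∧ η < 1)
    (p : ℝ) (hp0 : Real.logb 2 Cμ / (Real.logb 2 Cμ + η) < p) (hp1 : p ≤ 1)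
    (β γ : ℝ) (hβ : Real.logb 2 Cμ * (1 / p - 1) < β ∧ β < η)
    (hγ : Real.logb 2 Cμ * (1 / p - 1) < γ ∧ γ < η) :
    (∀ f : X → ℝ, MemLp f 2 μ → Integrable f μ → InHcw d μ p f →
      ∫ x, f x ∂μ = 0) ∧
    (∀ (x₀ : X) (f : X → ℝ), Integrable f μ →
      -- the size condition of `G(x₀,1,β,γ)` with constant `1`:
      (∀ x : X, |f x| ≤
        ((μ (qball d x₀ 1)).toReal + (μ (qball d x₀ (d x₀ x))).toReal)⁻¹
          * (1 / (1 + d x₀ x)) ^ γ) →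
      -- the regularity condition of `G(x₀,1,β,γ)` with constant `1`:
      (∀ x y : X, d x y ≤ (2 * A0)⁻¹ * (1 + d x₀ x) →
        |f x - f y| ≤ (d x y / (1 + d x₀ x)) ^ β
          * ((μ (qball d x₀ 1)).toReal + (μ (qball d x₀ (d x₀ x))).toReal)⁻¹
          * (1 / (1 + d x₀ x)) ^ γ) →
      (∫ x, f x ∂μ) ≠ 0 →
      Inhp d μ p f ∧ ¬ InHcw d μ p f) :=
  stmt19_general d μ A0 hd_nonneg hball Cμ hCμ hdouble η hη p hp0 hp1 β γ hγ
end
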